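/- arXiv:2305.15103 — 10 statements merged into one kernel-verified Lean document; each statement's English description precedes it below -/
import Mathlib

section
/- Let φ : S^{p-1} → S^q be a 1-Lipschitz map between round unit spheres (with their intrinsic spherical distances). If the image of φ contains no pair of antipodal points (i.e., there is no x, y with φ(y) = -φ(x)), then φ(S^{p-1}) is contained in an open hemisphere of S^q; equivalently, there exists a unit vector v ∈ R^{q+1} such that ⟨φ(x), v⟩ > 0 for all x ∈ S^{p-1}. -/
open scoped RealInnerProductSpace

private lemma norm_sub_le_arccos_aux {n : ℕ} {a b : EuclideanSpace ℝ (Fin n)}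
    (ha : ‖a‖ = 1) (hb : ‖b‖ = 1) : ‖a - b‖ ≤ Real.arccos ⟪a, b⟫ := by
  have habs : |⟪a, b⟫| ≤ 1 := by
    have := abs_real_inner_le_norm a b
    rwa [ha, hb, mul_one] at this
  have h1 : (-1 : ℝ) ≤ ⟪a, b⟫ := neg_le_of_abs_le habs
  have h2 : ⟪a, b⟫ ≤ 1 := le_of_abs_le habs
  set θ := Real.arccos ⟪a, b⟫ with hθ
  have hθ0 : 0 ≤ θ := Real.arccos_nonneg _
  have hcos : Real.cos θ = ⟪a, b⟫ := Real.cos_arccos h1 h2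
  have hsq : ‖a - b‖ ^ 2 ≤ θ ^ 2 := by
    rw [norm_sub_sq_real, ha, hb]
    have hs : Real.sin (θ / 2) ^ 2 ≤ (θ / 2) ^ 2 := Real.sin_sq_le_sq
    have hc2 := Real.cos_sq (θ / 2)
    rw [show 2 * (θ / 2) = θ by ring] at hc2
    have hpy := Real.sin_sq_add_cos_sq (θ / 2)
    nlinarith [hs, hc2, hpy, hcos]
  nlinarith [hsq, norm_nonneg (a - b), hθ0]

/-- A 1-Lipschitz map between round spheres (for the geodesic distance
`arccos⟪·,·⟫`) whose image contains no pair of antipodal points has image contained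
in an open hemisphere. -/
theorem lipschitz_sphere_map_image_in_open_hemisphere
    (p q : ℕ)
    (φ : Metric.sphere (0 : EuclideanSpace ℝ (Fin p)) 1 →
         Metric.sphere (0 : EuclideanSpace ℝ (Fin (q + 1))) 1)
    (hlip : ∀ x y,
      Real.arccos ⟪(φ x : EuclideanSpace ℝ (Fin (q + 1))), (φ y : EuclideanSpace ℝ (Fin (q + 1)))⟫
        ≤ Real.arccos ⟪(x : EuclideanSpace ℝ (Fin p)), (y : EuclideanSpace ℝ (Fin p))⟫)
    (hant : ¬ ∃ x y, (φ y : EuclideanSpace ℝ (Fin (q + 1)))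
        = -(φ x : EuclideanSpace ℝ (Fin (q + 1)))) :
    ∃ v : EuclideanSpace ℝ (Fin (q + 1)), ‖v‖ = 1 ∧
      ∀ x, 0 < ⟪(φ x : EuclideanSpace ℝ (Fin (q + 1))), v⟫ := by
  by_cases hne : Nonempty (Metric.sphere (0 : EuclideanSpace ℝ (Fin p)) 1)
  case neg =>
    refine ⟨EuclideanSpace.single (0 : Fin (q + 1)) (1 : ℝ), ?_, ?_⟩
    · simp [EuclideanSpace.norm_single]
    · intro x
      exact absurd ⟨x⟩ hne
  case pos =>
  -- unit norm facts
  have hu : ∀ z, ‖(φ z : EuclideanSpace ℝ (Fin (q + 1)))‖ = 1 := fun z =>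
    mem_sphere_zero_iff_norm.mp (φ z).2
  have hd : ∀ x : Metric.sphere (0 : EuclideanSpace ℝ (Fin p)) 1,
      ‖(x : EuclideanSpace ℝ (Fin p))‖ = 1 := fun x => mem_sphere_zero_iff_norm.mp x.2
  have hbnd : ∀ z w, |⟪(φ z : EuclideanSpace ℝ (Fin (q + 1))),
      (φ w : EuclideanSpace ℝ (Fin (q + 1)))⟫| ≤ 1 := by
    intro z w
    have := abs_real_inner_le_norm (φ z : EuclideanSpace ℝ (Fin (q + 1)))
      (φ w : EuclideanSpace ℝ (Fin (q + 1)))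
    rwa [hu z, hu w, mul_one] at this
  -- every value lies in the closed hemisphere with pole `φ x + φ (-x)`
  have hemi : ∀ x z, (0 : ℝ) ≤ ⟪(φ z : EuclideanSpace ℝ (Fin (q + 1))),
      (φ x : EuclideanSpace ℝ (Fin (q + 1))) + (φ (-x) : EuclideanSpace ℝ (Fin (q + 1)))⟫ := by
    intro x z
    have h1 := hlip x z
    have h2 := hlip (-x) z
    rw [coe_neg_sphere, inner_neg_left, Real.arccos_neg] at h2
    have hcomb : Real.arccos ⟪(φ x : EuclideanSpace ℝ (Fin (q + 1))),
        (φ z : EuclideanSpace ℝ (Fin (q + 1)))⟫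
        ≤ Real.arccos (-⟪(φ (-x) : EuclideanSpace ℝ (Fin (q + 1))),
          (φ z : EuclideanSpace ℝ (Fin (q + 1)))⟫) := by
      rw [Real.arccos_neg]
      linarith
    have hmono := Real.cos_le_cos_of_nonneg_of_le_pi (Real.arccos_nonneg _)
      (Real.arccos_le_pi _) hcomb
    rw [Real.cos_arccos (by linarith [(abs_le.mp (hbnd x z)).1, (abs_le.mp (hbnd x z)).2, (abs_le.mp (hbnd (-x) z)).1, (abs_le.mp (hbnd (-x) z)).2])
          (by linarith [(abs_le.mp (hbnd x z)).1, (abs_le.mp (hbnd x z)).2, (abs_le.mp (hbnd (-x) z)).1, (abs_le.mp (hbnd (-x) z)).2]),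
        Real.cos_arccos (by linarith [(abs_le.mp (hbnd x z)).1, (abs_le.mp (hbnd x z)).2, (abs_le.mp (hbnd (-x) z)).1, (abs_le.mp (hbnd (-x) z)).2])
          (by linarith [(abs_le.mp (hbnd x z)).1, (abs_le.mp (hbnd x z)).2, (abs_le.mp (hbnd (-x) z)).1, (abs_le.mp (hbnd (-x) z)).2])] at hmono
    have e1 : ⟪(φ z : EuclideanSpace ℝ (Fin (q + 1))), (φ x : EuclideanSpace ℝ (Fin (q + 1)))⟫
        = ⟪(φ x : EuclideanSpace ℝ (Fin (q + 1))), (φ z : EuclideanSpace ℝ (Fin (q + 1)))⟫ :=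
      real_inner_comm _ _
    have e2 : ⟪(φ z : EuclideanSpace ℝ (Fin (q + 1))), (φ (-x) : EuclideanSpace ℝ (Fin (q + 1)))⟫
        = ⟪(φ (-x) : EuclideanSpace ℝ (Fin (q + 1))), (φ z : EuclideanSpace ℝ (Fin (q + 1)))⟫ :=
      real_inner_comm _ _
    rw [inner_add_right, e1, e2]
    linarith
  -- `φ x` is strictly inside its own hemisphere
  have selfpos : ∀ x, (0 : ℝ) < ⟪(φ x : EuclideanSpace ℝ (Fin (q + 1))),
      (φ x : EuclideanSpace ℝ (Fin (q + 1))) + (φ (-x) : EuclideanSpace ℝ (Fin (q + 1)))⟫ := by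
    intro x
    have hself : ⟪(φ x : EuclideanSpace ℝ (Fin (q + 1))),
        (φ x : EuclideanSpace ℝ (Fin (q + 1)))⟫ = 1 := by
      rw [real_inner_self_eq_norm_sq, hu x]; norm_num
    have ht : (-1 : ℝ) ≤ ⟪(φ x : EuclideanSpace ℝ (Fin (q + 1))),
        (φ (-x) : EuclideanSpace ℝ (Fin (q + 1)))⟫ := by
      linarith [(abs_le.mp (hbnd x (-x))).1]
    rcases ht.eq_or_lt with heq | hlt
    · exfalso
      apply hant
      refine ⟨x, -x, ?_⟩
      have hz : ‖(φ x : EuclideanSpace ℝ (Fin (q + 1)))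
          + (φ (-x) : EuclideanSpace ℝ (Fin (q + 1)))‖ ^ 2 = 0 := by
        rw [norm_add_sq_real, hu x, hu (-x), ← heq]; ring
      have h0 : (φ x : EuclideanSpace ℝ (Fin (q + 1)))
          + (φ (-x) : EuclideanSpace ℝ (Fin (q + 1))) = 0 := by
        have := pow_eq_zero_iff (n := 2) (by norm_num) |>.mp hz
        exact norm_eq_zero.mp this
      exact eq_neg_of_add_eq_zero_right h0
    · rw [inner_add_right, hself]
      linarith
  -- continuity of `φ` (into the ambient space)
  have hcont : Continuous fun z : Metric.sphere (0 : EuclideanSpace ℝ (Fin p)) 1 =>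
      (φ z : EuclideanSpace ℝ (Fin (q + 1))) := by
    rw [continuous_iff_continuousAt]
    intro w
    have key : ∀ z, dist (φ z : EuclideanSpace ℝ (Fin (q + 1)))
        (φ w : EuclideanSpace ℝ (Fin (q + 1)))
        ≤ Real.arccos ⟪(z : EuclideanSpace ℝ (Fin p)), (w : EuclideanSpace ℝ (Fin p))⟫ := by
      intro z
      rw [dist_eq_norm]
      exact (norm_sub_le_arccos_aux (hu z) (hu w)).trans (hlip z w)
    have hgc : Continuous fun z : Metric.sphere (0 : EuclideanSpace ℝ (Fin p)) 1 =>
        Real.arccos ⟪(z : EuclideanSpace ℝ (Fin p)), (w : EuclideanSpace ℝ (Fin p))⟫ :=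
      Real.continuous_arccos.comp (continuous_subtype_val.inner continuous_const)
    have h0 : Real.arccos ⟪(w : EuclideanSpace ℝ (Fin p)), (w : EuclideanSpace ℝ (Fin p))⟫
        = 0 := by
      have : ⟪(w : EuclideanSpace ℝ (Fin p)), (w : EuclideanSpace ℝ (Fin p))⟫ = 1 := by
        rw [real_inner_self_eq_norm_sq, hd w]; norm_num
      rw [this, Real.arccos_one]
    have hg : Filter.Tendsto
        (fun z : Metric.sphere (0 : EuclideanSpace ℝ (Fin p)) 1 =>
          Real.arccos ⟪(z : EuclideanSpace ℝ (Fin p)), (w : EuclideanSpace ℝ (Fin p))⟫)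
        (nhds w) (nhds 0) := by
      have := hgc.continuousAt (x := w)
      rwa [ContinuousAt, h0] at this
    rw [ContinuousAt, tendsto_iff_dist_tendsto_zero]
    exact squeeze_zero (fun z => dist_nonneg) key hg
  -- compactness of the domain sphere, finite subcover
  have hcomp : IsCompact (Set.univ : Set (Metric.sphere (0 : EuclideanSpace ℝ (Fin p)) 1)) := by
    rw [← isCompact_iff_isCompact_univ]
    exact isCompact_sphere 0 1
  have hUopen : ∀ x : Metric.sphere (0 : EuclideanSpace ℝ (Fin p)) 1,
      IsOpen {z : Metric.sphere (0 : EuclideanSpace ℝ (Fin p)) 1 |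
        (0 : ℝ) < ⟪(φ z : EuclideanSpace ℝ (Fin (q + 1))),
          (φ x : EuclideanSpace ℝ (Fin (q + 1)))
            + (φ (-x) : EuclideanSpace ℝ (Fin (q + 1)))⟫} := by
    intro x
    exact isOpen_lt continuous_const (hcont.inner continuous_const)
  have hcover : (Set.univ : Set (Metric.sphere (0 : EuclideanSpace ℝ (Fin p)) 1))
      ⊆ ⋃ x, {z : Metric.sphere (0 : EuclideanSpace ℝ (Fin p)) 1 |
        (0 : ℝ) < ⟪(φ z : EuclideanSpace ℝ (Fin (q + 1))),
          (φ x : EuclideanSpace ℝ (Fin (q + 1)))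
            + (φ (-x) : EuclideanSpace ℝ (Fin (q + 1)))⟫} := by
    intro z _
    exact Set.mem_iUnion.mpr ⟨z, selfpos z⟩
  obtain ⟨t, ht⟩ := hcomp.elim_finite_subcover _ hUopen hcover
  -- the candidate direction
  set v₀ : EuclideanSpace ℝ (Fin (q + 1)) :=
    ∑ x ∈ t, ((φ x : EuclideanSpace ℝ (Fin (q + 1)))
      + (φ (-x) : EuclideanSpace ℝ (Fin (q + 1)))) with hv₀
  have hpos : ∀ z, (0 : ℝ) < ⟪(φ z : EuclideanSpace ℝ (Fin (q + 1))), v₀⟫ := by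
    intro z
    have hz := ht (Set.mem_univ z)
    rw [Set.mem_iUnion₂] at hz
    obtain ⟨i, hit, hiz⟩ := hz
    rw [hv₀, inner_sum]
    exact Finset.sum_pos' (fun j _ => hemi j z) ⟨i, hit, hiz⟩
  obtain ⟨z₀⟩ := hne
  have hv0ne : v₀ ≠ 0 := by
    intro h
    have := hpos z₀
    rw [h, inner_zero_right] at this
    exact lt_irrefl _ this
  have hnormpos : (0 : ℝ) < ‖v₀‖ := norm_pos_iff.mpr hv0ne
  refine ⟨‖v₀‖⁻¹ • v₀, ?_, ?_⟩
  · rw [norm_smul, norm_inv, norm_norm, inv_mul_cancel₀ (ne_of_gt hnormpos)]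
  · intro x
    rw [real_inner_smul_right]
    exact mul_pos (inv_pos.mpr hnormpos) (hpos x)
end

section
/- Let φ : S^{p-1} → S^q be a 1-Lipschitz map between round unit spheres. If 0 ∈ R^{q+1} lies in the convex hull of φ(S^{p-1}), then the image of φ contains a pair of antipodal points, i.e., there exist x, y ∈ S^{p-1} with φ(y) = -φ(x). -/
open scoped RealInnerProductSpace

/-- The Lipschitz condition in terms of `arccos` implies monotonicity of inner products. -/
lemma inner_ge_of_arccos_le {E F : Type*} [NormedAddCommGroup E] [InnerProductSpace ℝ E]
    [NormedAddCommGroup F] [InnerProductSpace ℝ F]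
    {a b : E} {c d : F} (ha : ‖a‖ = 1) (hb : ‖b‖ = 1) (hc : ‖c‖ = 1) (hd : ‖d‖ = 1)
    (h : Real.arccos ⟪a, b⟫ ≤ Real.arccos ⟪c, d⟫) : ⟪c, d⟫ ≤ ⟪a, b⟫ := by
  have hab : ⟪a, b⟫ ∈ Set.Icc (-1 : ℝ) 1 := by
    constructor
    · have := abs_real_inner_le_norm a b
      rw [ha, hb] at this; simp at this; linarith [neg_abs_le (⟪a, b⟫)]
    · have := abs_real_inner_le_norm a b
      rw [ha, hb] at this; simp at this; linarith [le_abs_self (⟪a, b⟫)]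
  have hcd : ⟪c, d⟫ ∈ Set.Icc (-1 : ℝ) 1 := by
    constructor
    · have := abs_real_inner_le_norm c d
      rw [hc, hd] at this; simp at this; linarith [neg_abs_le (⟪c, d⟫)]
    · have := abs_real_inner_le_norm c d
      rw [hc, hd] at this; simp at this; linarith [le_abs_self (⟪c, d⟫)]
  by_contra hlt
  push_neg at hlt
  exact absurd (Real.strictAntiOn_arccos hab hcd hlt) (not_lt.2 h)

set_option maxHeartbeats 1000000 in
/-- If `0` lies in the convex hull of the image of a 1-Lipschitz map between
round spheres, then the image contains a pair of antipodal points. -/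
theorem zero_in_convexHull_implies_antipodal
    (p q : ℕ)
    (φ : Metric.sphere (0 : EuclideanSpace ℝ (Fin p)) 1 →
         Metric.sphere (0 : EuclideanSpace ℝ (Fin (q + 1))) 1)
    (hlip : ∀ x y,
      Real.arccos ⟪(φ x : EuclideanSpace ℝ (Fin (q + 1))), (φ y : EuclideanSpace ℝ (Fin (q + 1)))⟫
        ≤ Real.arccos ⟪(x : EuclideanSpace ℝ (Fin p)), (y : EuclideanSpace ℝ (Fin p))⟫)
    (hhull : (0 : EuclideanSpace ℝ (Fin (q + 1))) ∈
      convexHull ℝ (Set.range fun x => (φ x : EuclideanSpace ℝ (Fin (q + 1))))) :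
    ∃ x y, (φ y : EuclideanSpace ℝ (Fin (q + 1))) = -(φ x : EuclideanSpace ℝ (Fin (q + 1))) := by
  -- norms
  have hnormS : ∀ x : Metric.sphere (0 : EuclideanSpace ℝ (Fin p)) 1,
      ‖(x : EuclideanSpace ℝ (Fin p))‖ = 1 := fun x => mem_sphere_zero_iff_norm.mp x.2
  have hnormT : ∀ x : Metric.sphere (0 : EuclideanSpace ℝ (Fin (q + 1))) 1,
      ‖(x : EuclideanSpace ℝ (Fin (q + 1)))‖ = 1 := fun x => mem_sphere_zero_iff_norm.mp x.2
  -- the Lipschitz condition implies inner product monotonicity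
  have key : ∀ x y : Metric.sphere (0 : EuclideanSpace ℝ (Fin p)) 1,
      ⟪(x : EuclideanSpace ℝ (Fin p)), (y : EuclideanSpace ℝ (Fin p))⟫
      ≤ ⟪(φ x : EuclideanSpace ℝ (Fin (q + 1))), (φ y : EuclideanSpace ℝ (Fin (q + 1)))⟫ := by
    intro x y
    exact inner_ge_of_arccos_le (hnormT (φ x)) (hnormT (φ y)) (hnormS x) (hnormS y) (hlip x y)
  rw [convexHull_eq] at hhull
  obtain ⟨ι, t, w, z, hw0, hw1, hz, hcm⟩ := hhull
  -- choose preimages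
  choose a ha using fun (i : ι) (hi : i ∈ t) => hz i hi
  -- some weight is positive
  have hpos : ∃ i ∈ t, 0 < w i := by
    by_contra h
    push_neg at h
    have : ∑ i ∈ t, w i = 0 :=
      Finset.sum_eq_zero fun i hi => le_antisymm (h i hi) (hw0 i hi)
    rw [hw1] at this; norm_num at this
  obtain ⟨i, hi, hwi⟩ := hpos
  set x := a i hi with hx
  -- the antipode of x on the sphere
  have hmem : -(x : EuclideanSpace ℝ (Fin p)) ∈ Metric.sphere (0 : EuclideanSpace ℝ (Fin p)) 1 := by
    rw [mem_sphere_zero_iff_norm, norm_neg, hnormS]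
  set y : Metric.sphere (0 : EuclideanSpace ℝ (Fin p)) 1 := ⟨-(x : EuclideanSpace ℝ (Fin p)), hmem⟩
    with hy
  refine ⟨x, y, ?_⟩
  -- the sum of weighted points is 0
  have hsum : ∑ j ∈ t, w j • z j = 0 := by
    have := Finset.centerMass_eq_of_sum_1 t z hw1
    rw [hcm] at this
    exact this.symm
  -- each term of the pairing sum is nonnegative
  have hterm : ∀ j ∈ t, 0 ≤ w j *
      ⟪(φ x : EuclideanSpace ℝ (Fin (q + 1))) + (φ y : EuclideanSpace ℝ (Fin (q + 1))), z j⟫ := by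
    intro j hj
    apply mul_nonneg (hw0 j hj)
    rw [show z j = (φ (a j hj) : EuclideanSpace ℝ (Fin (q + 1))) from (ha j hj).symm]
    rw [inner_add_left]
    have h1 := key x (a j hj)
    have h2 := key y (a j hj)
    have hyx : ⟪(y : EuclideanSpace ℝ (Fin p)), (a j hj : EuclideanSpace ℝ (Fin p))⟫
        = -⟪(x : EuclideanSpace ℝ (Fin p)), (a j hj : EuclideanSpace ℝ (Fin p))⟫ := by
      rw [hy]; simp [inner_neg_left]
    rw [hyx] at h2
    linarith
  -- but the total pairing sum is 0
  have htotal : ∑ j ∈ t, w j *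
      ⟪(φ x : EuclideanSpace ℝ (Fin (q + 1))) + (φ y : EuclideanSpace ℝ (Fin (q + 1))), z j⟫
      = 0 := by
    have : ∑ j ∈ t, w j *
        ⟪(φ x : EuclideanSpace ℝ (Fin (q + 1))) + (φ y : EuclideanSpace ℝ (Fin (q + 1))), z j⟫
        = ⟪(φ x : EuclideanSpace ℝ (Fin (q + 1))) + (φ y : EuclideanSpace ℝ (Fin (q + 1))),
            ∑ j ∈ t, w j • z j⟫ := by
      rw [inner_sum]
      exact Finset.sum_congr rfl fun j hj => by rw [real_inner_smul_right]
    rw [this, hsum, inner_zero_right]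
  -- hence each term is 0, in particular the i-th one
  have hzero := (Finset.sum_eq_zero_iff_of_nonneg hterm).mp htotal i hi
  have hzi : z i = (φ x : EuclideanSpace ℝ (Fin (q + 1))) := (ha i hi).symm
  rw [hzi] at hzero
  have hinner : ⟪(φ x : EuclideanSpace ℝ (Fin (q + 1)))
      + (φ y : EuclideanSpace ℝ (Fin (q + 1))), (φ x : EuclideanSpace ℝ (Fin (q + 1)))⟫ = 0 := by
    rcases mul_eq_zero.mp hzero with h | h
    · exact absurd h (ne_of_gt hwi)
    · exact h
  rw [inner_add_left, real_inner_self_eq_norm_sq, hnormT] at hinner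
  -- ⟪φ y, φ x⟫ = -1 forces φ y = -φ x
  have hfin : ‖(φ y : EuclideanSpace ℝ (Fin (q + 1)))
      + (φ x : EuclideanSpace ℝ (Fin (q + 1)))‖ ^ 2 = 0 := by
    rw [← real_inner_self_eq_norm_sq, inner_add_add_self, real_inner_self_eq_norm_sq,
      real_inner_self_eq_norm_sq, hnormT, hnormT]
    have hc : ⟪(φ y : EuclideanSpace ℝ (Fin (q + 1))), (φ x : EuclideanSpace ℝ (Fin (q + 1)))⟫
        = -1 := by linarith
    have hc2 : ⟪(φ x : EuclideanSpace ℝ (Fin (q + 1))), (φ y : EuclideanSpace ℝ (Fin (q + 1)))⟫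
        = -1 := by rw [real_inner_comm]; exact hc
    linarith
  have := pow_eq_zero_iff (n := 2) (by norm_num) |>.mp hfin
  have := norm_eq_zero.mp this
  exact eq_neg_of_add_eq_zero_left this
end

section
/- Let φ : S^{p-1} → S^q be a 1-Lipschitz map whose image contains no antipodal points. Then there exists a continuous family (φ_t)_{t ∈ [0,1]} of maps S^{p-1} → S^q such that φ_0 = φ, φ_1 is a constant map, and for each t the map φ_t is (1-t)-Lipschitz with respect to the spherical distances. -/
open scoped RealInnerProductSpace

private lemma defc_sqrt_lip {s u m : ℝ} (hs : 0 ≤ s) (hu : 0 ≤ u) (hm : 0 ≤ m) :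
    |Real.sqrt (s^2+m) - Real.sqrt (u^2+m)| ≤ |s - u| := by
  have h1 : (0:ℝ) ≤ s^2 + m := by positivity
  have h2 : (0:ℝ) ≤ u^2 + m := by positivity
  set P := Real.sqrt (s^2+m) with hPdef
  set Q := Real.sqrt (u^2+m) with hQdef
  have hP : P^2 = s^2+m := Real.sq_sqrt h1
  have hQ : Q^2 = u^2+m := Real.sq_sqrt h2
  have hPs : s ≤ P := by rw [hPdef]; exact (Real.le_sqrt hs h1).mpr (by nlinarith)
  have hQu : u ≤ Q := by rw [hQdef]; exact (Real.le_sqrt hu h2).mpr (by nlinarith)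
  have h0 : (P-Q)*(P+Q) = (s-u)*(s+u) := by linear_combination hP - hQ
  have hsq : (P - Q)^2 ≤ (s - u)^2 := by
    rcases eq_or_lt_of_le (by linarith : (0:ℝ) ≤ P + Q) with h | h
    · have hP0 : P = 0 := by nlinarith [Real.sqrt_nonneg (u^2+m)]
      have hQ0 : Q = 0 := by linarith
      have : s = 0 := le_antisymm (by linarith) hs
      have : u = 0 := le_antisymm (by linarith) hu
      nlinarith [sq_nonneg (s-u)]
    · have hsq0 : ((P-Q)*(P+Q))^2 = ((s-u)*(s+u))^2 := by rw [h0]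
      have hS2D2 : (s+u)^2 ≤ (P+Q)^2 := by nlinarith
      nlinarith [mul_pos h h, sq_nonneg (s-u), sq_nonneg (P-Q)]
  calc |P - Q| = Real.sqrt ((P-Q)^2) := (Real.sqrt_sq_eq_abs _).symm
    _ ≤ Real.sqrt ((s-u)^2) := Real.sqrt_le_sqrt hsq
    _ = |s - u| := Real.sqrt_sq_eq_abs _

private lemma defc_trig_key {l θ : ℝ} (hl0 : 0 ≤ l) (hl1 : l ≤ 1) (hθ0 : 0 ≤ θ)
    (hθπ : θ ≤ Real.pi) :
    l^2 * (1 - Real.cos θ) ≤ 1 - Real.cos (l*θ) := by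
  set u := θ/2 with hu
  have hu0 : 0 ≤ u := by positivity
  have huπ : u ≤ Real.pi := by
    have := Real.pi_pos; simp only [hu]; linarith
  have hsin : l * Real.sin u ≤ Real.sin (l * u) := by
    have h := strictConcaveOn_sin_Icc.concaveOn.2 (x := u) (y := 0)
      ⟨hu0, huπ⟩ ⟨le_refl 0, Real.pi_pos.le⟩ hl0 (by linarith : (0:ℝ) ≤ 1 - l) (by ring)
    simpa using h
  have hsnn : 0 ≤ Real.sin u := Real.sin_nonneg_of_nonneg_of_le_pi hu0 huπ
  have hsq : l^2 * (Real.sin u)^2 ≤ (Real.sin (l*u))^2 := by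
    have h0 : 0 ≤ l * Real.sin u := mul_nonneg hl0 hsnn
    nlinarith
  have hθ : θ = 2*u := by rw [hu]; ring
  have hlθ : l*θ = 2*(l*u) := by rw [hu]; ring
  rw [hlθ, hθ, Real.cos_two_mul, Real.cos_two_mul]
  have p1 : Real.sin u ^2 + Real.cos u ^2 = 1 := Real.sin_sq_add_cos_sq u
  have p2 : Real.sin (l*u) ^2 + Real.cos (l*u) ^2 = 1 := Real.sin_sq_add_cos_sq (l*u)
  nlinarith

private lemma defc_sum_sq_le {ι F G : Type*} [NormedAddCommGroup F] [InnerProductSpace ℝ F]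
    [NormedAddCommGroup G] [InnerProductSpace ℝ G]
    (T : Finset ι) (W : ι → ℝ) (hW : ∀ i ∈ T, 0 ≤ W i)
    (g : ι → F) (h : ι → G)
    (hgh : ∀ i ∈ T, ∀ j ∈ T, ⟪g i, g j⟫ ≤ ⟪h i, h j⟫) :
    ‖∑ i ∈ T, W i • g i‖^2 ≤ ‖∑ i ∈ T, W i • h i‖^2 := by
  rw [← real_inner_self_eq_norm_sq, ← real_inner_self_eq_norm_sq]
  rw [sum_inner, sum_inner]
  refine Finset.sum_le_sum fun i hi => ?_
  rw [real_inner_smul_left, real_inner_smul_left, inner_sum, inner_sum]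
  refine mul_le_mul_of_nonneg_left (Finset.sum_le_sum fun j hj => ?_) (hW i hi)
  rw [real_inner_smul_right, real_inner_smul_right]
  exact mul_le_mul_of_nonneg_left (hgh i hi j hj) (hW j hj)

private lemma defc_no_hemisphere_false (p q : ℕ)
    (φ : Metric.sphere (0 : EuclideanSpace ℝ (Fin p)) 1 →
         Metric.sphere (0 : EuclideanSpace ℝ (Fin (q + 1))) 1)
    (hinner : ∀ x y : Metric.sphere (0 : EuclideanSpace ℝ (Fin p)) 1,
      ⟪(x : EuclideanSpace ℝ (Fin p)), (y : EuclideanSpace ℝ (Fin p))⟫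
        ≤ ⟪(φ x : EuclideanSpace ℝ (Fin (q + 1))), (φ y : EuclideanSpace ℝ (Fin (q + 1)))⟫)
    (hant : ¬ ∃ x y, (φ y : EuclideanSpace ℝ (Fin (q + 1)))
        = -(φ x : EuclideanSpace ℝ (Fin (q + 1))))
    (x₁ : Metric.sphere (0 : EuclideanSpace ℝ (Fin p)) 1)
    (hdual : ∀ c : EuclideanSpace ℝ (Fin (q+1)),
      (∀ x, 0 ≤ ⟪c, (φ x : EuclideanSpace ℝ (Fin (q+1)))⟫) → c = 0) :
    False := by
  classical
  set E := EuclideanSpace ℝ (Fin (q+1))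
  set Ep := EuclideanSpace ℝ (Fin p)
  have hnorm : ∀ x, ‖(φ x : E)‖ = 1 := fun x => by
    simpa using mem_sphere_zero_iff_norm.mp (φ x).2
  have hnormp : ∀ x : Metric.sphere (0 : Ep) 1, ‖(x : Ep)‖ = 1 := fun x => by
    simpa using mem_sphere_zero_iff_norm.mp x.2
  set K : Set E := Set.range (fun x => (φ x : E)) with hK
  set C₀ : Submodule {c : ℝ // 0 ≤ c} E := Submodule.span {c : ℝ // 0 ≤ c} K with hC₀
  set Kcl : ConvexCone ℝ E := ((C₀ : PointedCone ℝ E) : ConvexCone ℝ E).closure with hKcl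
  set u : E := (φ x₁ : E) with hu
  set nx₁ : Metric.sphere (0 : Ep) 1 := ⟨-(x₁ : Ep), by
    rw [mem_sphere_zero_iff_norm, norm_neg]
    exact mem_sphere_zero_iff_norm.mp x₁.2⟩ with hnx₁
  set n' : E := (φ nx₁ : E) with hn'
  have hmem : -u ∈ closure (C₀ : Set E) := by
    by_contra hb
    obtain ⟨y, hy1, hy2⟩ :=
      ProperCone.hyperplane_separation'
        (⟨(C₀ : PointedCone ℝ E).closure, isClosed_closure⟩ : ProperCone ℝ E) hb
    have : y = 0 := by
      refine hdual y fun x => ?_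
      have hx : (φ x : E) ∈ Kcl :=
        subset_closure (Submodule.subset_span ⟨x, rfl⟩)
      have := hy1 _ hx
      rwa [real_inner_comm] at this
    rw [this] at hy2
    simp at hy2
  have hkey : ∀ ε : ℝ, 0 < ε → ⟪n', u⟫ + 1 < 2*ε := by
    intro ε hε
    obtain ⟨s, hsC, hds⟩ := Metric.mem_closure_iff.mp hmem ε hε
    obtain ⟨n, f, g, hfg⟩ := Submodule.mem_span_set'.mp hsC
    have hpre : ∀ i : Fin n, ∃ x, (φ x : E) = (g i : E) := fun i => (g i).2
    choose ξ hξ using hpre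
    set P : Fin (n+1) → Metric.sphere (0 : Ep) 1 := Fin.cases x₁ ξ with hP
    set W : Fin (n+1) → ℝ := Fin.cases 1 (fun i => ((f i : {c : ℝ // 0 ≤ c}) : ℝ)) with hW
    have hWnn : ∀ j, 0 ≤ W j := by
      intro j
      induction j using Fin.cases with
      | zero => simp [hW]
      | succ i => simpa [hW] using (f i).2
    set V : Fin (n+1) → E := fun j => (φ (P j) : E) with hV
    set vv : E := ∑ j, W j • V j with hvv
    have hvv_eq : vv = u + s := by
      rw [hvv, Fin.sum_univ_succ]
      simp only [hW, hV, hP, Fin.cases_zero, Fin.cases_succ, one_smul]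
      rw [← hfg]
      congr 1
      refine Finset.sum_congr rfl fun i _ => ?_
      rw [hξ i]
      rfl
    have hvvnorm : ‖vv‖ < ε := by
      rw [hvv_eq]
      have habel : (-u) - s = -(u + s) := by abel
      rw [dist_eq_norm, habel, norm_neg] at hds
      exact hds
    set X : Ep := ∑ j, W j • (P j : Ep) with hX
    have hXle : ‖X‖^2 ≤ ‖vv‖^2 := by
      rw [hX, hvv]
      exact defc_sum_sq_le _ _ (fun j _ => hWnn j) _ _
        (fun i _ j _ => hinner (P i) (P j))
    have hXnorm : ‖X‖ ≤ ‖vv‖ := by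
      have := norm_nonneg X; have := norm_nonneg vv; nlinarith
    set A : Fin (n+1) → ℝ := fun j => ⟪n', V j⟫ + ⟪(x₁ : Ep), (P j : Ep)⟫ with hA
    have hAnn : ∀ j, 0 ≤ A j := by
      intro j
      have h1 := hinner nx₁ (P j)
      have h2 : ⟪(nx₁ : Ep), (P j : Ep)⟫ = -⟪(x₁ : Ep), (P j : Ep)⟫ := by
        rw [hnx₁]; exact inner_neg_left _ _
      rw [h2] at h1
      simp only [hA, hV, hn']
      linarith [h1]
    have hsum : ∑ j, W j * A j = ⟪n', vv⟫ + ⟪(x₁ : Ep), X⟫ := by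
      rw [hvv, hX, inner_sum, inner_sum, ← Finset.sum_add_distrib]
      refine Finset.sum_congr rfl fun j _ => ?_
      rw [real_inner_smul_right, real_inner_smul_right, hA]
      ring
    have hsum_lt : ∑ j, W j * A j < 2*ε := by
      rw [hsum]
      have b1 : ⟪n', vv⟫ ≤ ‖vv‖ := by
        calc ⟪n', vv⟫ ≤ ‖n'‖ * ‖vv‖ := real_inner_le_norm _ _
          _ = ‖vv‖ := by rw [hn', hnorm]; ring
      have b2 : ⟪(x₁ : Ep), X⟫ ≤ ‖X‖ := by
        calc ⟪(x₁ : Ep), X⟫ ≤ ‖(x₁ : Ep)‖ * ‖X‖ := real_inner_le_norm _ _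
          _ = ‖X‖ := by rw [hnormp]; ring
      linarith
    have hA0 : A 0 ≤ ∑ j, W j * A j := by
      have h0 : A 0 = W 0 * A 0 := by simp [hW]
      rw [h0]
      exact Finset.single_le_sum (f := fun j => W j * A j)
        (fun j _ => mul_nonneg (hWnn j) (hAnn j)) (Finset.mem_univ 0)
    have hA0eq : A 0 = ⟪n', u⟫ + 1 := by
      simp only [hA, hV, hP, hW, Fin.cases_zero, hu]
      have : ⟪(x₁ : Ep), (x₁ : Ep)⟫ = 1 := by
        rw [real_inner_self_eq_norm_sq, hnormp]; norm_num
      rw [this]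
    linarith [hA0eq ▸ (hA0.trans_lt hsum_lt)]
  have hle : ⟪n', u⟫ + 1 ≤ 0 := by
    by_contra h
    push_neg at h
    have := hkey ((⟪n', u⟫ + 1)/2) (by linarith)
    linarith
  have hnn : 0 ≤ ⟪n', u⟫ + 1 := by
    have h := real_inner_le_norm n' (-u)
    rw [inner_neg_right] at h
    have : ‖n'‖ * ‖-u‖ = 1 := by
      rw [norm_neg, hn', hu, hnorm, hnorm]; ring
    linarith
  have heq : n' = -u := by
    have : ‖n' + u‖^2 = 0 := by
      rw [norm_add_sq_real, hn', hu, hnorm, hnorm]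
      nlinarith [hle, hnn]
    have h0 : n' + u = 0 := by
      rwa [pow_eq_zero_iff (by norm_num : 2 ≠ 0), norm_eq_zero] at this
    exact eq_neg_of_add_eq_zero_left h0
  exact hant ⟨x₁, nx₁, heq⟩

set_option maxHeartbeats 2000000 in
/-- A 1-Lipschitz sphere map with no antipodal points in its image can be
continuously deformed through `(1-t)`-Lipschitz maps to a constant map. -/
theorem deformation_to_constant
    (p q : ℕ)
    (φ : Metric.sphere (0 : EuclideanSpace ℝ (Fin p)) 1 →
         Metric.sphere (0 : EuclideanSpace ℝ (Fin (q + 1))) 1)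
    (hlip : ∀ x y,
      Real.arccos ⟪(φ x : EuclideanSpace ℝ (Fin (q + 1))), (φ y : EuclideanSpace ℝ (Fin (q + 1)))⟫
        ≤ Real.arccos ⟪(x : EuclideanSpace ℝ (Fin p)), (y : EuclideanSpace ℝ (Fin p))⟫)
    (hant : ¬ ∃ x y, (φ y : EuclideanSpace ℝ (Fin (q + 1)))
        = -(φ x : EuclideanSpace ℝ (Fin (q + 1)))) :
    ∃ Φ : ℝ → Metric.sphere (0 : EuclideanSpace ℝ (Fin p)) 1 →
          Metric.sphere (0 : EuclideanSpace ℝ (Fin (q + 1))) 1,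
      Continuous (fun z : ℝ × Metric.sphere (0 : EuclideanSpace ℝ (Fin p)) 1 => Φ z.1 z.2) ∧
      Φ 0 = φ ∧
      (∃ c, ∀ x, Φ 1 x = c) ∧
      (∀ t ∈ Set.Icc (0 : ℝ) 1, ∀ x y,
        Real.arccos ⟪(Φ t x : EuclideanSpace ℝ (Fin (q + 1))), (Φ t y : EuclideanSpace ℝ (Fin (q + 1)))⟫
          ≤ (1 - t) * Real.arccos ⟪(x : EuclideanSpace ℝ (Fin p)), (y : EuclideanSpace ℝ (Fin p))⟫) := by
  classical
  set E := EuclideanSpace ℝ (Fin (q+1)) with hE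
  set Ep := EuclideanSpace ℝ (Fin p) with hEp
  have hnorm : ∀ x, ‖(φ x : E)‖ = 1 := fun x => by
    simpa using mem_sphere_zero_iff_norm.mp (φ x).2
  have hnormp : ∀ x : Metric.sphere (0 : Ep) 1, ‖(x : Ep)‖ = 1 := fun x => by
    simpa using mem_sphere_zero_iff_norm.mp x.2
  -- inner product comparison
  have hinner : ∀ x y : Metric.sphere (0 : Ep) 1,
      ⟪(x : Ep), (y : Ep)⟫ ≤ ⟪(φ x : E), (φ y : E)⟫ := by
    intro x y
    have hB1 : |⟪(x : Ep), (y : Ep)⟫| ≤ 1 := by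
      have := abs_real_inner_le_norm (x : Ep) (y : Ep)
      rwa [hnormp, hnormp, one_mul] at this
    have hA1 : |⟪(φ x : E), (φ y : E)⟫| ≤ 1 := by
      have := abs_real_inner_le_norm (φ x : E) (φ y : E)
      rwa [hnorm, hnorm, one_mul] at this
    have hcos := Real.cos_le_cos_of_nonneg_of_le_pi
      (Real.arccos_nonneg _) (Real.arccos_le_pi _) (hlip x y)
    rwa [Real.cos_arccos (by linarith [abs_le.mp hB1]) (by linarith [abs_le.mp hB1]),
      Real.cos_arccos (by linarith [abs_le.mp hA1]) (by linarith [abs_le.mp hA1])] at hcos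
  -- chordal comparison and continuity of φ
  have hchord : ∀ x y : Metric.sphere (0 : Ep) 1,
      ‖(φ x : E) - (φ y : E)‖ ≤ ‖(x : Ep) - (y : Ep)‖ := by
    intro x y
    have h1 : ‖(φ x : E) - (φ y : E)‖^2 ≤ ‖(x : Ep) - (y : Ep)‖^2 := by
      rw [norm_sub_sq_real, norm_sub_sq_real, hnorm, hnorm, hnormp, hnormp]
      have := hinner x y
      nlinarith
    exact (pow_le_pow_iff_left₀ (norm_nonneg _) (norm_nonneg _) (by norm_num)).mp h1
  have hφcont : Continuous fun x : Metric.sphere (0 : Ep) 1 => (φ x : E) := by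
    have : LipschitzWith 1 φ := by
      refine LipschitzWith.of_dist_le_mul fun x y => ?_
      rw [Subtype.dist_eq, Subtype.dist_eq, dist_eq_norm, dist_eq_norm]
      simpa using hchord x y
    exact continuous_subtype_val.comp this.continuous
  by_cases hne : Nonempty (Metric.sphere (0 : Ep) 1)
  · -- Main case: domain nonempty
    obtain ⟨x₁⟩ := hne
    -- find a hemisphere containing the image
    have hhemi : ∃ c : E, (∀ x, 0 ≤ ⟪c, (φ x : E)⟫) ∧ c ≠ 0 := by
      by_contra hcon
      push_neg at hcon
      exact defc_no_hemisphere_false p q φ hinner hant x₁ fun c hc => hcon c hc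
    obtain ⟨c', hc'1, hc'0⟩ := hhemi
    set c : E := ‖c'‖⁻¹ • c' with hc
    have hcnorm : ‖c‖ = 1 := norm_smul_inv_norm hc'0
    have hcnn : ∀ x, 0 ≤ ⟪c, (φ x : E)⟫ := by
      intro x
      rw [hc, real_inner_smul_left]
      exact mul_nonneg (inv_nonneg.mpr (norm_nonneg _)) (hc'1 x)
    have hcc : ⟪c, c⟫ = 1 := by
      rw [real_inner_self_eq_norm_sq, hcnorm]; norm_num
    -- decomposition
    set α : Metric.sphere (0 : Ep) 1 → ℝ := fun x => ⟪c, (φ x : E)⟫ with hα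
    set w : Metric.sphere (0 : Ep) 1 → E := fun x => (φ x : E) - α x • c with hwdef
    have hort : ∀ x, ⟪c, w x⟫ = 0 := by
      intro x
      have hwx : w x = (φ x : E) - α x • c := rfl
      have hax : α x = ⟪c, (φ x : E)⟫ := rfl
      rw [hwx, inner_sub_right, real_inner_smul_right, hcc, hax]
      ring
    have hα0 : ∀ x, 0 ≤ α x := hcnn
    have hα1 : ∀ x, α x ≤ 1 := by
      intro x
      have := abs_real_inner_le_norm c (φ x : E)
      rw [hcnorm, hnorm, one_mul] at this
      exact (abs_le.mp this).2
    have hwsq : ∀ x, ‖w x‖^2 = 1 - (α x)^2 := by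
      intro x
      have hwx : w x = (φ x : E) - α x • c := rfl
      rw [hwx, norm_sub_sq_real, hnorm]
      have h1 : ⟪(φ x : E), α x • c⟫ = α x * α x := by
        rw [real_inner_smul_right, real_inner_comm]
      have h2 : ‖α x • c‖^2 = (α x)^2 := by
        rw [norm_smul, hcnorm, mul_one, Real.norm_eq_abs, sq_abs]
      rw [h1, h2]
      ring
    have hwle : ∀ x, ‖w x‖^2 ≤ 1 := by
      intro x
      rw [hwsq]
      nlinarith [hα0 x, hα1 x]
    -- time reparametrisation
    set lam : ℝ → ℝ := fun t => 1 - min 1 (max 0 t) with hlam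
    have hlam0 : ∀ t, 0 ≤ lam t := by
      intro t
      show 0 ≤ 1 - min 1 (max 0 t)
      have : min 1 (max 0 t) ≤ 1 := min_le_left _ _
      linarith
    have hlam1 : ∀ t, lam t ≤ 1 := by
      intro t
      show 1 - min 1 (max 0 t) ≤ 1
      have h1 : (0:ℝ) ≤ max 0 t := le_max_left _ _
      have : (0:ℝ) ≤ min 1 (max 0 t) := le_min (by norm_num) h1
      linarith
    have hlamIcc : ∀ t ∈ Set.Icc (0:ℝ) 1, lam t = 1 - t := by
      intro t ht
      show 1 - min 1 (max 0 t) = 1 - t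
      rw [max_eq_right ht.1, min_eq_right ht.2]
    -- the homotopy
    have hNarg : ∀ t x, 0 ≤ 1 - (lam t)^2 * ‖w x‖^2 := by
      intro t x
      have h1 := hlam0 t; have h2 := hlam1 t; have h3 := hwle x
      have h4 : (0:ℝ) ≤ ‖w x‖^2 := sq_nonneg _
      nlinarith
    set N : ℝ → Metric.sphere (0 : Ep) 1 → ℝ :=
      fun t x => Real.sqrt (1 - (lam t)^2 * ‖w x‖^2) with hN
    have hsphere : ∀ t x, N t x • c + lam t • w x ∈ Metric.sphere (0 : E) 1 := by
      intro t x
      rw [mem_sphere_zero_iff_norm]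
      have hnsq : ‖N t x • c + lam t • w x‖^2 = 1 := by
        rw [norm_add_sq_real]
        have h1 : ⟪N t x • c, lam t • w x⟫ = 0 := by
          rw [real_inner_smul_left, real_inner_smul_right, hort]
          ring
        have h2 : ‖N t x • c‖^2 = 1 - (lam t)^2 * ‖w x‖^2 := by
          rw [norm_smul, hcnorm, mul_one, Real.norm_eq_abs, sq_abs]
          exact Real.sq_sqrt (hNarg t x)
        have h3 : ‖lam t • w x‖^2 = (lam t)^2 * ‖w x‖^2 := by
          rw [norm_smul, mul_pow, Real.norm_eq_abs, sq_abs]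
        rw [h1, h2, h3]
        ring
      calc ‖N t x • c + lam t • w x‖
          = Real.sqrt (‖N t x • c + lam t • w x‖^2) := (Real.sqrt_sq (norm_nonneg _)).symm
        _ = Real.sqrt 1 := by rw [hnsq]
        _ = 1 := Real.sqrt_one
    set Φ : ℝ → Metric.sphere (0 : Ep) 1 → Metric.sphere (0 : E) 1 :=
      fun t x => ⟨N t x • c + lam t • w x, hsphere t x⟩ with hΦ
    refine ⟨Φ, ?_, ?_, ?_, ?_⟩
    · -- continuity
      have hwcont : Continuous w := by
        rw [hwdef]
        exact hφcont.sub (Continuous.smul (f := α) (g := fun _ => c) (continuous_const.inner hφcont) continuous_const)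
      have hlamcont : Continuous lam := by
        rw [hlam]
        exact continuous_const.sub (continuous_const.min (continuous_const.max continuous_id))
      have hlamz : Continuous fun z : ℝ × Metric.sphere (0 : Ep) 1 => lam z.1 :=
        hlamcont.comp continuous_fst
      have hwz : Continuous fun z : ℝ × Metric.sphere (0 : Ep) 1 => w z.2 :=
        hwcont.comp continuous_snd
      have hNz : Continuous fun z : ℝ × Metric.sphere (0 : Ep) 1 =>
          Real.sqrt (1 - (lam z.1)^2 * ‖w z.2‖^2) :=
        Real.continuous_sqrt.comp
          (continuous_const.sub ((hlamz.pow 2).mul (hwz.norm.pow 2)))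
      exact Continuous.subtype_mk ((hNz.smul continuous_const).add (hlamz.smul hwz)) _
    · -- time 0
      funext x
      apply Subtype.ext
      show N 0 x • c + lam 0 • w x = (φ x : E)
      have hl0 : lam 0 = 1 := by
        show 1 - min 1 (max 0 0) = 1
        norm_num
      have hN0 : N 0 x = α x := by
        have hNx : N 0 x = Real.sqrt (1 - (lam 0)^2 * ‖w x‖^2) := rfl
        rw [hNx, hl0, hwsq x]
        have : (1:ℝ) - 1^2 * (1 - (α x)^2) = (α x)^2 := by ring
        rw [this, Real.sqrt_sq (hα0 x)]
      rw [hl0, hN0, one_smul]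
      show α x • c + ((φ x : E) - α x • c) = (φ x : E)
      abel
    · -- time 1
      refine ⟨⟨c, mem_sphere_zero_iff_norm.mpr hcnorm⟩, fun x => ?_⟩
      apply Subtype.ext
      show N 1 x • c + lam 1 • w x = c
      have hl1 : lam 1 = 0 := by
        show 1 - min 1 (max 0 1) = 0
        norm_num
      have hN1 : N 1 x = 1 := by
        have hNx : N 1 x = Real.sqrt (1 - (lam 1)^2 * ‖w x‖^2) := rfl
        rw [hNx, hl1]
        norm_num
      rw [hl1, hN1, one_smul, zero_smul, add_zero]
    · -- Lipschitz bound
      intro t ht x y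
      have hl := hlamIcc t ht
      set l := lam t with hldef
      have hl0 := hlam0 t
      have hl1 := hlam1 t
      -- chordal bound
      have hchordΦ : ‖(Φ t x : E) - (Φ t y : E)‖^2 ≤ l^2 * ‖(x : Ep) - (y : Ep)‖^2 := by
        have hdec : (Φ t x : E) - (Φ t y : E)
            = (N t x - N t y) • c + l • (w x - w y) := by
          show (N t x • c + l • w x) - (N t y • c + l • w y) = _
          rw [add_sub_add_comm, ← sub_smul, ← smul_sub]
        have hosq : ‖(N t x - N t y) • c + l • (w x - w y)‖^2
            = (N t x - N t y)^2 + l^2 * ‖w x - w y‖^2 := by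
          rw [norm_add_sq_real]
          have h1 : ⟪(N t x - N t y) • c, l • (w x - w y)⟫ = 0 := by
            rw [real_inner_smul_left, real_inner_smul_right, inner_sub_right,
              hort, hort]
            ring
          have h2 : ‖(N t x - N t y) • c‖^2 = (N t x - N t y)^2 := by
            rw [norm_smul, hcnorm, mul_one, Real.norm_eq_abs, sq_abs]
          have h3 : ‖l • (w x - w y)‖^2 = l^2 * ‖w x - w y‖^2 := by
            rw [norm_smul, mul_pow, Real.norm_eq_abs, sq_abs]
          rw [h1, h2, h3]
          ring
        have hNdiff : (N t x - N t y)^2 ≤ l^2 * (α x - α y)^2 := by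
          have harg : ∀ z, 1 - l^2 * ‖w z‖^2 = (l * α z)^2 + (1 - l^2) := by
            intro z
            rw [hwsq]
            ring
          have hx' : N t x = Real.sqrt ((l * α x)^2 + (1 - l^2)) := by
            have hNx : N t x = Real.sqrt (1 - l^2 * ‖w x‖^2) := rfl
            rw [hNx, harg x]
          have hy' : N t y = Real.sqrt ((l * α y)^2 + (1 - l^2)) := by
            have hNy : N t y = Real.sqrt (1 - l^2 * ‖w y‖^2) := rfl
            rw [hNy, harg y]
          have hlip2 : |N t x - N t y| ≤ |l * α x - l * α y| := by
            rw [hx', hy']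
            exact defc_sqrt_lip (mul_nonneg hl0 (hα0 x)) (mul_nonneg hl0 (hα0 y))
              (by nlinarith)
          have := pow_le_pow_left₀ (abs_nonneg _) hlip2 2
          rw [sq_abs, sq_abs] at this
          calc (N t x - N t y)^2 ≤ (l * α x - l * α y)^2 := this
            _ = l^2 * (α x - α y)^2 := by ring
        have hφdec : (φ x : E) - (φ y : E) = (α x - α y) • c + (w x - w y) := by
          have h1 : w x = (φ x : E) - α x • c := rfl
          have h2 : w y = (φ y : E) - α y • c := rfl
          rw [h1, h2, sub_smul]
          abel
        have hφsq : ‖(φ x : E) - (φ y : E)‖^2 = (α x - α y)^2 + ‖w x - w y‖^2 := by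
          rw [hφdec, norm_add_sq_real]
          have h1 : ⟪(α x - α y) • c, w x - w y⟫ = 0 := by
            rw [real_inner_smul_left, inner_sub_right, hort, hort]
            ring
          have h2 : ‖(α x - α y) • c‖^2 = (α x - α y)^2 := by
            rw [norm_smul, hcnorm, mul_one, Real.norm_eq_abs, sq_abs]
          rw [h1, h2]
          ring
        have hφle : ‖(φ x : E) - (φ y : E)‖^2 ≤ ‖(x : Ep) - (y : Ep)‖^2 := by
          rw [norm_sub_sq_real, norm_sub_sq_real, hnorm, hnorm, hnormp, hnormp]
          have := hinner x y
          nlinarith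
        rw [hdec, hosq]
        nlinarith [hφsq, hφle, hNdiff, sq_nonneg l, sq_nonneg (N t x - N t y),
          norm_nonneg (w x - w y)]
      -- convert to arccos
      have hBabs : |⟪(x : Ep), (y : Ep)⟫| ≤ 1 := by
        have := abs_real_inner_le_norm (x : Ep) (y : Ep)
        rwa [hnormp, hnormp, one_mul] at this
      set θ := Real.arccos ⟪(x : Ep), (y : Ep)⟫ with hθ
      have hθ0 : 0 ≤ θ := Real.arccos_nonneg _
      have hθπ : θ ≤ Real.pi := Real.arccos_le_pi _
      have hcosθ : Real.cos θ = ⟪(x : Ep), (y : Ep)⟫ :=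
        Real.cos_arccos (by linarith [abs_le.mp hBabs]) (by linarith [abs_le.mp hBabs])
      have hxy : ‖(x : Ep) - (y : Ep)‖^2 = 2 - 2 * Real.cos θ := by
        rw [norm_sub_sq_real, hnormp, hnormp, hcosθ]
        ring
      have hΦinner : ⟪(Φ t x : E), (Φ t y : E)⟫
          = 1 - ‖(Φ t x : E) - (Φ t y : E)‖^2 / 2 := by
        have h := norm_sub_sq_real (Φ t x : E) (Φ t y : E)
        have h1 : ‖(Φ t x : E)‖ = 1 := by
          simpa using mem_sphere_zero_iff_norm.mp (Φ t x).2
        have h2 : ‖(Φ t y : E)‖ = 1 := by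
          simpa using mem_sphere_zero_iff_norm.mp (Φ t y).2
        rw [h1, h2] at h
        linarith
      have htrig := defc_trig_key hl0 hl1 hθ0 hθπ
      have hge : Real.cos (l * θ) ≤ ⟪(Φ t x : E), (Φ t y : E)⟫ := by
        rw [hΦinner]
        have := hchordΦ
        rw [hxy] at this
        nlinarith
      have harccos_le : Real.arccos ⟪(Φ t x : E), (Φ t y : E)⟫ ≤ l * θ := by
        have hlθ0 : 0 ≤ l * θ := mul_nonneg hl0 hθ0
        have hlθπ : l * θ ≤ Real.pi := by
          calc l * θ ≤ 1 * θ := mul_le_mul_of_nonneg_right hl1 hθ0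
            _ = θ := one_mul θ
            _ ≤ Real.pi := hθπ
        have hmono : Real.arccos ⟪(Φ t x : E), (Φ t y : E)⟫
            ≤ Real.arccos (Real.cos (l * θ)) := by
          rw [Real.arccos_eq_pi_div_two_sub_arcsin, Real.arccos_eq_pi_div_two_sub_arcsin]
          have := Real.monotone_arcsin hge
          linarith
        rwa [Real.arccos_cos hlθ0 hlθπ] at hmono
      rw [hl] at harccos_le
      exact harccos_le
  · -- empty domain
    refine ⟨fun _ x => φ x, ?_, rfl, ?_, ?_⟩
    · have hφc : Continuous φ := Continuous.subtype_mk hφcont (fun x => (φ x).2)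
      exact hφc.comp continuous_snd
    · refine ⟨⟨EuclideanSpace.single 0 1, ?_⟩, fun x => absurd ⟨x⟩ hne⟩
      rw [mem_sphere_zero_iff_norm, EuclideanSpace.norm_single]
      norm_num
    · exact fun t _ x => absurd ⟨x⟩ hne
end

section
/- Fix r ∈ (0, π/2) and s ∈ [0,1]. On the geodesic ball B_r(0) of radius r centered at a point y of the round sphere S^q (identified via geodesic normal coordinates with the Euclidean ball of radius r in R^q), the radial scaling map Φ_s(x) := s·x is (sin(rs)/sin(r))-Lipschitz with respect to the spherical metric on B_r(0). -/
open scoped RealInnerProductSpace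
open Real Classical

/-- The exponential map of the round unit sphere `S^q ⊂ ℝ^{q+1}` at the point `y`,
applied to a tangent vector `x ⊥ y`: `exp_y(x) = cos‖x‖ · y + sin‖x‖ · x/‖x‖`. -/
noncomputable def sphereExp (q : ℕ) (y x : EuclideanSpace ℝ (Fin (q + 1))) :
    EuclideanSpace ℝ (Fin (q + 1)) :=
  Real.cos ‖x‖ • y + (if x = 0 then 0 else (Real.sin ‖x‖ / ‖x‖) • x)

/-! By the spherical law of cosines, two points at geodesic distances `a`, `b` from `y` whose
tangent directions make the angle `θ` are at distance `d` with
`sin² (d/2) = sin² ((a - b)/2) + sin a sin b sin² (θ/2)`. Scaling by `s` replaces `a, b` by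
`s a, s b`; as `sin (s t) / sin t` increases on `(0, π)`, every sine on the right shrinks by at
least the factor `K = sin (s r) / sin r ≤ 1` when `a, b ≤ r`. Hence
`sin (d_s/2) ≤ K sin (d/2) ≤ sin (K d/2)` by concavity of `sin`, that is `d_s ≤ K d`. -/

open Set

lemma hasDerivAt_sin_mul (s t : ℝ) : HasDerivAt (fun u => sin (s * u)) (s * cos (s * t)) t := by
  simpa [mul_comm] using ((hasDerivAt_id t).const_mul s).sin

lemma sin_mul_mul_cos_le {s t : ℝ} (hs : s ∈ Icc (0 : ℝ) 1) (ht : t ∈ Icc 0 π) :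
    sin (s * t) * cos t ≤ s * cos (s * t) * sin t := by
  let g : ℝ → ℝ := fun u => s * cos (s * u) * sin u - sin (s * u) * cos u
  have hg : ∀ u, HasDerivAt g ((1 - s ^ 2) * (sin (s * u) * sin u)) u := fun u => by
    have hcos : HasDerivAt (fun u => cos (s * u)) (-(s * sin (s * u))) u := by
      simpa [mul_comm] using ((hasDerivAt_id u).const_mul s).cos
    refine (((hcos.const_mul s).mul (hasDerivAt_sin u)).sub
      ((hasDerivAt_sin_mul s u).mul (hasDerivAt_cos u))).congr_deriv ?_
    ring
  have hmono : MonotoneOn g (Icc 0 π) := by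
    refine monotoneOn_of_hasDerivWithinAt_nonneg (convex_Icc 0 π)
      (fun u _ => (hg u).continuousAt.continuousWithinAt) (fun u _ => (hg u).hasDerivWithinAt)
      fun u hu => ?_
    rw [interior_Icc] at hu
    have hsu : s * u ≤ u := mul_le_of_le_one_left hu.1.le hs.2
    have : s ^ 2 ≤ 1 := pow_le_one₀ hs.1 hs.2
    have := sin_nonneg_of_nonneg_of_le_pi (mul_nonneg hs.1 hu.1.le) (hsu.trans hu.2.le)
    have := sin_nonneg_of_nonneg_of_le_pi hu.1.le hu.2.le
    positivity
  have := hmono ⟨le_rfl, pi_pos.le⟩ ht ht.1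
  simp only [g, mul_zero, sin_zero, cos_zero] at this
  linarith

lemma monotoneOn_sin_mul_div_sin {s : ℝ} (hs : s ∈ Icc (0 : ℝ) 1) :
    MonotoneOn (fun t => sin (s * t) / sin t) (Ioo 0 π) := by
  have hsin : ∀ t ∈ Ioo 0 π, sin t ≠ 0 := fun t ht => (sin_pos_of_pos_of_lt_pi ht.1 ht.2).ne'
  refine monotoneOn_of_hasDerivWithinAt_nonneg (convex_Ioo 0 π)
    (f' := fun t => (s * cos (s * t) * sin t - sin (s * t) * cos t) / sin t ^ 2)
    (fun t ht => ((hasDerivAt_sin_mul s t).div (hasDerivAt_sin t) (hsin t ht)).continuousAt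
      |>.continuousWithinAt)
    (fun t ht => ?_) fun t ht => ?_
  · rw [interior_Ioo] at ht
    exact ((hasDerivAt_sin_mul s t).div (hasDerivAt_sin t) (hsin t ht)).hasDerivWithinAt
  · rw [interior_Ioo] at ht
    have := sin_mul_mul_cos_le hs (Ioo_subset_Icc_self ht)
    exact div_nonneg (by linarith) (sq_nonneg _)

lemma sin_mul_le_div_mul_sin {r s t : ℝ} (hr : r ∈ Ioo 0 π) (hs : s ∈ Icc (0 : ℝ) 1)
    (ht : t ∈ Icc 0 r) : sin (s * t) ≤ sin (s * r) / sin r * sin t := by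
  rcases ht.1.eq_or_lt with rfl | ht0
  · simp
  have hsint := sin_pos_of_pos_of_lt_pi ht0 (ht.2.trans_lt hr.2)
  have := monotoneOn_sin_mul_div_sin hs ⟨ht0, ht.2.trans_lt hr.2⟩ hr ht.2
  rw [div_le_iff₀ hsint] at this
  exact this

lemma sin_sq_half_arccos {v : ℝ} (hv : v ∈ Icc (-1 : ℝ) 1) :
    sin (arccos v / 2) ^ 2 = (1 - v) / 2 := by
  rw [sin_sq_eq_half_sub, mul_div_cancel₀ _ two_ne_zero, cos_arccos hv.1 hv.2]
  ring

lemma sin_half_arccos_nonneg (v : ℝ) : 0 ≤ sin (arccos v / 2) :=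
  sin_nonneg_of_nonneg_of_le_pi (div_nonneg (arccos_nonneg v) zero_le_two)
    ((half_le_self (arccos_nonneg v)).trans (arccos_le_pi v))

lemma le_mul_of_sin_half_le_mul_sin_half {D D' K : ℝ} (hD : D ∈ Icc 0 π) (hD' : D' ∈ Icc 0 π)
    (hK : K ∈ Icc (0 : ℝ) 1) (h : sin (D' / 2) ≤ K * sin (D / 2)) : D' ≤ K * D := by
  have hconc : K * sin (D / 2) ≤ sin (K * (D / 2)) := by
    simpa using strictConcaveOn_sin_Icc.concaveOn.2 (x := D / 2) (y := 0)
      ⟨by linarith [hD.1], by linarith [hD.2, pi_pos]⟩ ⟨le_rfl, pi_pos.le⟩ hK.1 (sub_nonneg.2 hK.2)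
      (by ring)
  have hKD : K * (D / 2) ≤ π / 2 := by nlinarith [hD.1, hD.2, hK.1, hK.2]
  have := (strictMonoOn_sin.le_iff_le ⟨by linarith [pi_pos, hD'.1], by linarith [hD'.2]⟩
    ⟨by nlinarith [pi_pos, hD.1, hK.1], hKD⟩).1 (h.trans hconc)
  linarith

/-- The cosine of the spherical distance between points at distances `a` and `b` from a base point,
along geodesics leaving it at an angle of cosine `τ`. -/
noncomputable def sphericalCos (a b τ : ℝ) : ℝ := cos a * cos b + sin a * sin b * τ

lemma sphericalCos_mem_Icc (a b : ℝ) {τ : ℝ} (hτ : τ ∈ Icc (-1 : ℝ) 1) :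
    sphericalCos a b τ ∈ Icc (-1) 1 := by
  have hconv : sphericalCos a b τ = (1 + τ) / 2 * cos (a - b) + (1 - τ) / 2 * cos (a + b) := by
    rw [sphericalCos, cos_sub, cos_add]
    ring
  rw [hconv]
  constructor <;> nlinarith [hτ.1, hτ.2, neg_one_le_cos (a - b), neg_one_le_cos (a + b),
    cos_le_one (a - b), cos_le_one (a + b)]

lemma sin_sq_half_arccos_sphericalCos (a b : ℝ) {τ : ℝ} (hτ : τ ∈ Icc (-1 : ℝ) 1) :
    sin (arccos (sphericalCos a b τ) / 2) ^ 2 =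
      sin ((a - b) / 2) ^ 2 + sin a * sin b * ((1 - τ) / 2) := by
  rw [sin_sq_half_arccos (sphericalCos_mem_Icc a b hτ), sin_sq_eq_half_sub,
    mul_div_cancel₀ _ two_ne_zero, sphericalCos, cos_sub]
  ring

lemma sin_mul_sq_le_div_mul_sin_sq {r s c : ℝ} (hr : r ∈ Ioo 0 π) (hs : s ∈ Icc (0 : ℝ) 1)
    (hc : |c| ≤ r) : sin (s * c) ^ 2 ≤ (sin (s * r) / sin r) ^ 2 * sin c ^ 2 := by
  have h := sin_mul_le_div_mul_sin hr hs ⟨abs_nonneg c, hc⟩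
  have h0 : 0 ≤ sin (s * |c|) := sin_nonneg_of_nonneg_of_le_pi (mul_nonneg hs.1 (abs_nonneg c))
    ((mul_le_of_le_one_left (abs_nonneg c) hs.2).trans (hc.trans hr.2.le))
  rw [← mul_pow]
  rcases abs_choice c with hc' | hc' <;> rw [hc'] at h h0
  · exact pow_le_pow_left₀ h0 h 2
  · simpa [mul_neg, sin_neg] using pow_le_pow_left₀ h0 h 2

lemma arccos_sphericalCos_mul_le {r s a b τ : ℝ} (hr : r ∈ Ioc 0 (π / 2))
    (hs : s ∈ Icc (0 : ℝ) 1) (ha : a ∈ Icc 0 r) (hb : b ∈ Icc 0 r) (hτ : τ ∈ Icc (-1 : ℝ) 1) :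
    arccos (sphericalCos (s * a) (s * b) τ) ≤
      sin (s * r) / sin r * arccos (sphericalCos a b τ) := by
  have hr' : r ∈ Ioo 0 π := ⟨hr.1, hr.2.trans_lt (half_lt_self pi_pos)⟩
  set K := sin (s * r) / sin r
  have hK : K ∈ Icc (0 : ℝ) 1 := by
    have hsr : s * r ≤ r := mul_le_of_le_one_left hr.1.le hs.2
    have hsinr := sin_pos_of_pos_of_lt_pi hr'.1 hr'.2
    refine ⟨div_nonneg (sin_nonneg_of_nonneg_of_le_pi (mul_nonneg hs.1 hr.1.le) ?_) hsinr.le,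
      (div_le_one hsinr).2 (sin_le_sin_of_le_of_le_pi_div_two ?_ hr.2 hsr)⟩
    · linarith [hr'.2]
    · linarith [pi_pos, mul_nonneg hs.1 hr.1.le]
  have hsin_nonneg : ∀ t ∈ Icc 0 r, 0 ≤ sin t := fun t ht =>
    sin_nonneg_of_nonneg_of_le_pi ht.1 (ht.2.trans hr'.2.le)
  have hdiff : sin ((s * a - s * b) / 2) ^ 2 ≤ K ^ 2 * sin ((a - b) / 2) ^ 2 := by
    rw [← mul_sub, mul_div_assoc]
    refine sin_mul_sq_le_div_mul_sin_sq hr' hs ?_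
    rw [abs_le]
    constructor <;> linarith [ha.1, ha.2, hb.1, hb.2]
  have hprod : sin (s * a) * sin (s * b) * ((1 - τ) / 2) ≤
      K ^ 2 * (sin a * sin b * ((1 - τ) / 2)) := by
    have hm : 0 ≤ (1 - τ) / 2 := by linarith [hτ.2]
    have := mul_le_mul (sin_mul_le_div_mul_sin hr' hs ha) (sin_mul_le_div_mul_sin hr' hs hb)
      (hsin_nonneg _ ⟨mul_nonneg hs.1 hb.1, (mul_le_of_le_one_left hb.1 hs.2).trans hb.2⟩)
      (mul_nonneg hK.1 (hsin_nonneg a ha))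
    nlinarith
  have hhalf : sin (arccos (sphericalCos (s * a) (s * b) τ) / 2) ≤
      K * sin (arccos (sphericalCos a b τ) / 2) := by
    refine (pow_le_pow_iff_left₀ (sin_half_arccos_nonneg _)
      (mul_nonneg hK.1 (sin_half_arccos_nonneg _)) two_ne_zero).1 ?_
    rw [mul_pow, sin_sq_half_arccos_sphericalCos _ _ hτ, sin_sq_half_arccos_sphericalCos _ _ hτ]
    linarith
  exact le_mul_of_sin_half_le_mul_sin_half ⟨arccos_nonneg _, arccos_le_pi _⟩
    ⟨arccos_nonneg _, arccos_le_pi _⟩ hK hhalf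

lemma sphereExp_smul {q : ℕ} (y x : EuclideanSpace ℝ (Fin (q + 1))) {s : ℝ} (hs : 0 ≤ s) :
    sphereExp q y (s • x) = cos (s * ‖x‖) • y + (sin (s * ‖x‖) / ‖x‖) • x := by
  rw [sphereExp, norm_smul, norm_of_nonneg hs]
  split_ifs with h
  · rcases smul_eq_zero.1 h with rfl | rfl <;> simp
  · obtain ⟨hs0, hx⟩ := smul_ne_zero_iff.1 h
    have hx' : ‖x‖ ≠ 0 := norm_ne_zero_iff.2 hx
    rw [smul_smul]
    congr 2
    field_simp

/-- For `v = 0` or `w = 0` the cosine `⟪v, w⟫ / (‖v‖ * ‖w‖)` is the junk value `0`, which is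
harmless: it is multiplied by `sin 0`. -/
lemma inner_sphereExp_smul {q : ℕ} {y v w : EuclideanSpace ℝ (Fin (q + 1))} (hy : ‖y‖ = 1)
    (hv : ⟪v, y⟫ = 0) (hw : ⟪w, y⟫ = 0) {s : ℝ} (hs : 0 ≤ s) :
    ⟪sphereExp q y (s • v), sphereExp q y (s • w)⟫ =
      sphericalCos (s * ‖v‖) (s * ‖w‖) (⟪v, w⟫ / (‖v‖ * ‖w‖)) := by
  have hw' : ⟪y, w⟫ = 0 := by rw [real_inner_comm, hw]
  rw [sphereExp_smul y v hs, sphereExp_smul y w hs, sphericalCos]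
  simp only [inner_add_left, inner_add_right, real_inner_smul_left, real_inner_smul_right,
    real_inner_self_eq_norm_sq, hy, hv, hw']
  ring

/-- On the geodesic ball of radius `r < π/2` (in normal coordinates at
`y ∈ S^q`), the radial scaling `x ↦ s • x` is `(sin(rs)/sin r)`-Lipschitz for the
spherical distance. -/
theorem radial_scaling_lipschitz
    (q : ℕ) (r s : ℝ) (hr : r ∈ Set.Ioo 0 (π / 2)) (hs : s ∈ Set.Icc (0 : ℝ) 1)
    (y : EuclideanSpace ℝ (Fin (q + 1))) (hy : ‖y‖ = 1) :
    ∀ x₁ x₂ : EuclideanSpace ℝ (Fin (q + 1)),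
      ⟪x₁, y⟫ = 0 → ⟪x₂, y⟫ = 0 → ‖x₁‖ < r → ‖x₂‖ < r →
      Real.arccos ⟪sphereExp q y (s • x₁), sphereExp q y (s • x₂)⟫
        ≤ (Real.sin (r * s) / Real.sin r) * Real.arccos ⟪sphereExp q y x₁, sphereExp q y x₂⟫ := by
  intro x₁ x₂ h₁ h₂ hn₁ hn₂
  have hinner := inner_sphereExp_smul hy h₁ h₂ zero_le_one
  simp only [one_smul, one_mul] at hinner
  rw [hinner, inner_sphereExp_smul hy h₁ h₂ hs.1, mul_comm r s]
  exact arccos_sphericalCos_mul_le ⟨hr.1, hr.2.le⟩ hs ⟨norm_nonneg _, hn₁.le⟩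
    ⟨norm_nonneg _, hn₂.le⟩ (abs_le.1 (abs_real_inner_div_norm_mul_norm_le_one x₁ x₂))
end

section
/- Let P(x, ξ) = ξ² + a(x)ξ + b(x) be a continuous family of monic quadratic polynomials in ξ, defined for x ∈ [0, ∞), such that P(x, ξ) converges as x → +∞ to P_∞(ξ) = ξ² + a_∞ ξ + b_∞, uniformly for ξ in compact sets. Suppose P_∞(0) = b_∞ < -δ for some δ > 0. Then there exists C > 0 such that for every A ≥ 0 and every bounded continuous function u : [0, ∞) → [0, ∞) satisfying u'' + a(x)u' + b(x)u ≥ -A in the viscosity sense, one has sup_{x ≥ C} u(x) ≤ A/δ + u(C). -/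
open Filter Set

set_option maxHeartbeats 1000000

/-- viscosity supersolution estimate on a half-line. If
`P(x,ξ) = ξ² + a(x)ξ + b(x)` converges to `P_∞` with `P_∞(0) < -δ`, then there is `C > 0`
such that any bounded nonnegative continuous `u` satisfying `P(x,∂ₓ)u ≥ -A` in the
viscosity sense satisfies `u(x) ≤ A/δ + u(C)` for all `x ≥ C`. -/
theorem viscosity_halfline_estimate
    (a b : ℝ → ℝ) (ha : Continuous a) (hb : Continuous b)
    (aInf bInf : ℝ)
    (haTo : Tendsto a atTop (nhds aInf)) (hbTo : Tendsto b atTop (nhds bInf))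
    (δ : ℝ) (hδ : 0 < δ) (hPInf : bInf < -δ) :
    ∃ C : ℝ, 0 < C ∧ ∀ A : ℝ, 0 ≤ A → ∀ u : ℝ → ℝ,
      ContinuousOn u (Ici 0) →
      (∀ x ∈ Ici (0 : ℝ), 0 ≤ u x) →
      BddAbove (u '' Ici 0) →
      (∀ c ∈ Ici (0 : ℝ), ∀ g : ℝ → ℝ, ContDiff ℝ (⊤ : ℕ∞) g →
        (∀ x ∈ Ici (0 : ℝ), u x ≤ g x) → g c = u c →
        -A ≤ deriv (deriv g) c + a c * deriv g c + b c * g c) →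
      ∀ x : ℝ, C ≤ x → u x ≤ A / δ + u C := by
  set K : ℝ := |aInf| + 1 with hKdef
  have hK : 0 < K := by positivity
  have hEvb : ∀ᶠ x in atTop, b x < -δ := hbTo.eventually (gt_mem_nhds hPInf)
  have hEva : ∀ᶠ x in atTop, |a x| < K :=
    haTo.abs.eventually (gt_mem_nhds (lt_add_one |aInf|))
  obtain ⟨C0, hC0⟩ := eventually_atTop.mp (hEvb.and hEva)
  set C : ℝ := max C0 1 with hCdef
  have hCpos : (0 : ℝ) < C := lt_of_lt_of_le one_pos (le_max_right _ _)
  have hCgood : ∀ y : ℝ, C ≤ y → b y < -δ ∧ |a y| < K := by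
    intro y hy
    exact hC0 y (le_trans (le_max_left _ _) hy)
  refine ⟨C, hCpos, ?_⟩
  intro A hA u hu hupos hbdd hvisc x hx
  by_contra hcon
  push_neg at hcon
  have hAδ : 0 ≤ A / δ := div_nonneg hA hδ.le
  have huC : 0 ≤ u C := hupos C hCpos.le
  have hxC : C < x := by
    rcases lt_or_eq_of_le hx with h | h
    · exact h
    · exfalso; rw [← h] at hcon; linarith
  set d : ℝ := u x - u C - A / δ with hd
  have hdpos : 0 < d := by simp only [hd]; linarith
  obtain ⟨M, hMub⟩ := hbdd
  set M0 : ℝ := max M 0 with hM0def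
  have hM0 : ∀ y : ℝ, 0 ≤ y → u y ≤ M0 :=
    fun y hy => le_trans (hMub ⟨y, hy, rfl⟩) (le_max_left _ _)
  have hM0nn : (0 : ℝ) ≤ M0 := le_max_right _ _
  set ε : ℝ := min (d / (2 * (x - C))) (δ * d / (4 * K)) with hεdef
  have hε : 0 < ε := lt_min (div_pos hdpos (by linarith)) (by positivity)
  set v : ℝ → ℝ := fun y => u C + A / δ + ε * (y - C) with hv
  have htail : ∀ y : ℝ, C + M0 / ε ≤ y → u y - v y ≤ 0 := by
    intro y hy
    have h0y : (0 : ℝ) ≤ y := le_trans (by positivity) hy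
    have h1 : u y ≤ M0 := hM0 y h0y
    have h2 : M0 / ε ≤ y - C := by linarith
    have h3 : M0 ≤ ε * (y - C) := by
      rw [div_le_iff₀ hε] at h2; linarith [h2]
    simp only [hv]; linarith
  set X : ℝ := max x (C + M0 / ε) with hX
  have hCX : C ≤ X := le_trans hx (le_max_left _ _)
  have hsub : Icc C X ⊆ Ici (0 : ℝ) := fun y hy => le_trans hCpos.le hy.1
  have hcont : ContinuousOn (fun y => u y - v y) (Icc C X) := by
    apply ContinuousOn.sub (hu.mono hsub)
    exact (continuous_const.add
      (continuous_const.mul (continuous_id.sub continuous_const))).continuousOn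
  obtain ⟨c, hcmem, hcmax⟩ :=
    isCompact_Icc.exists_isMaxOn ⟨C, le_refl C, hCX⟩ hcont
  set m : ℝ := u c - v c with hm
  have hxmem : x ∈ Icc C X := ⟨hx, le_max_left _ _⟩
  have hm0 : d / 2 ≤ u x - v x := by
    have h1 : ε ≤ d / (2 * (x - C)) := min_le_left _ _
    rw [le_div_iff₀ (by linarith : (0:ℝ) < 2 * (x - C))] at h1
    rw [show ε * (2 * (x - C)) = 2 * (ε * (x - C)) from by ring] at h1
    simp only [hv, hd] at h1 ⊢
    linarith
  have hmd : d / 2 ≤ m := le_trans hm0 (hcmax hxmem)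
  have hmax' : ∀ y : ℝ, C ≤ y → u y - v y ≤ m := by
    intro y hy
    rcases le_or_gt y X with h | h
    · exact hcmax ⟨hy, h⟩
    · have := htail y (le_of_lt (lt_of_le_of_lt (le_max_right _ _) h))
      linarith
  have hcC : C < c := by
    rcases lt_or_eq_of_le hcmem.1 with h | h
    · exact h
    · exfalso
      have : m = -(A / δ) := by simp [hm, hv, ← h]
      linarith
  set κ : ℝ := (M0 + ε * C) / (c - C) ^ 4 with hκ
  have hκnn : 0 ≤ κ := by
    apply div_nonneg (by positivity)
    positivity
  set Q : ℝ → ℝ := fun y => κ * (y - c) ^ 4 with hQ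
  have hQnonneg : ∀ y, 0 ≤ Q y := by
    intro y; simp only [hQ]; positivity
  have hQB : ∀ y : ℝ, y ≤ C → M0 + ε * C ≤ Q y := by
    intro y hy
    have h1 : (c - C) ^ 4 ≤ (y - c) ^ 4 := by
      rw [show (y - c) ^ 4 = (c - y) ^ 4 from by ring]
      apply pow_le_pow_left₀ (by linarith) (by linarith)
    have h2 : κ * (c - C) ^ 4 ≤ κ * (y - c) ^ 4 :=
      mul_le_mul_of_nonneg_left h1 hκnn
    have hne : (c - C) ^ 4 ≠ 0 := pow_ne_zero _ (ne_of_gt (by linarith : (0:ℝ) < c - C))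
    have h3 : κ * (c - C) ^ 4 = M0 + ε * C := by
      rw [hκ, div_mul_cancel₀ _ hne]
    simp only [hQ]; linarith
  set g : ℝ → ℝ := fun y => v y + m + Q y with hg
  have hgu : ∀ y ∈ Ici (0 : ℝ), u y ≤ g y := by
    intro y hy
    rcases le_or_gt y C with h | h
    · have h1 : u y ≤ M0 := hM0 y hy
      have h2 : 0 ≤ ε * y := mul_nonneg hε.le hy
      have h3 := hQB y h
      simp only [hg, hv]
      nlinarith
    · have h1 := hmax' y h.le
      have h2 := hQnonneg y
      simp only [hg]; linarith
  have hgc : g c = u c := by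
    simp only [hg, hQ, hm, hv]; ring
  have hgsmooth : ContDiff ℝ (⊤ : ℕ∞) g := by
    apply ContDiff.add
    · apply ContDiff.add
      · exact contDiff_const.add (contDiff_const.mul (contDiff_id.sub contDiff_const))
      · exact contDiff_const
    · exact contDiff_const.mul ((contDiff_id.sub contDiff_const).pow 4)
  have hgd : ∀ y : ℝ, HasDerivAt g (ε + κ * (4 * (y - c) ^ 3)) y := by
    intro y
    have h1 : HasDerivAt (fun z : ℝ => u C + A / δ + ε * (z - C) + m) (ε * 1) y :=
      ((((hasDerivAt_id y).sub_const C).const_mul ε).const_add (u C + A / δ)).add_const m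
    have h2 : HasDerivAt (fun z : ℝ => z - c) 1 y := (hasDerivAt_id y).sub_const c
    have h3 : HasDerivAt (fun z : ℝ => (z - c) ^ 4) ((4 : ℕ) * (y - c) ^ (4 - 1) * 1) y :=
      h2.pow 4
    have h4 : HasDerivAt (fun z : ℝ => κ * (z - c) ^ 4) (κ * ((4 : ℕ) * (y - c) ^ (4 - 1) * 1)) y :=
      h3.const_mul κ
    have h5 : HasDerivAt g (ε * 1 + κ * ((4 : ℕ) * (y - c) ^ (4 - 1) * 1)) y := h1.add h4
    convert h5 using 1
    push_cast; ring
  have hderivg : deriv g = fun y => ε + κ * (4 * (y - c) ^ 3) := by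
    funext y; exact (hgd y).deriv
  have hderiv1 : deriv g c = ε := by
    rw [hderivg]; simp
  have hderiv2 : deriv (deriv g) c = 0 := by
    rw [hderivg]
    have h2 : HasDerivAt (fun z : ℝ => z - c) 1 c := (hasDerivAt_id c).sub_const c
    have h3 : HasDerivAt (fun z : ℝ => (z - c) ^ 3) ((3 : ℕ) * (c - c) ^ (3 - 1) * 1) c :=
      h2.pow 3
    have h4 : HasDerivAt (fun z : ℝ => ε + κ * (4 * (z - c) ^ 3))
        (κ * (4 * ((3 : ℕ) * (c - c) ^ (3 - 1) * 1))) c :=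
      ((h3.const_mul (4 : ℝ)).const_mul κ).const_add ε
    rw [h4.deriv]
    simp
  have hc0 : c ∈ Ici (0 : ℝ) := le_of_lt (lt_trans hCpos hcC)
  have key := hvisc c hc0 g hgsmooth hgu hgc
  rw [hderiv1, hderiv2, hgc] at key
  obtain ⟨hbc, hac⟩ := hCgood c hcC.le
  have huc : A / δ + d / 2 ≤ u c := by
    have h1 : 0 ≤ ε * (c - C) := mul_nonneg hε.le (by linarith)
    have h2 : u c = v c + m := by simp [hm]
    simp only [hv] at h2; linarith
  have haε : a c * ε ≤ K * ε := by
    have := (abs_le.mp hac.le).2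
    nlinarith
  have hucnn : 0 ≤ u c := hupos c hc0
  have hbu : b c * u c ≤ -δ * u c :=
    mul_le_mul_of_nonneg_right hbc.le hucnn
  have hδuc : -δ * u c ≤ -A - δ * (d / 2) := by
    have h1 : δ * (A / δ) = A := mul_div_cancel₀ A hδ.ne'
    nlinarith
  have hεK : ε ≤ δ * d / (4 * K) := min_le_right _ _
  clear_value K C d M0 ε v X m κ Q g
  have hKε : K * ε ≤ δ * d / 4 := by
    rw [le_div_iff₀ (by positivity : (0:ℝ) < 4 * K)] at hεK
    linarith [hεK, show ε * (4 * K) = 4 * (K * ε) from by ring]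
  have hδd : 0 < δ * d := mul_pos hδ hdpos
  linarith [key, haε, hbu, hδuc, hKε, hδd]
end

section
/- Under the hypotheses of the viscosity estimate for P(x,ξ) = ξ² + a(x)ξ + b(x) with limit P_∞(0) < -δ, there exists C > 0 such that for all A, B > 0 and every bounded continuous function u : [0,∞) → [0,∞) satisfying u'' + a(x)u' + b(x)u ≥ -A - B·(sup u)^{1/2} in the viscosity sense, one has sup u ≤ 2A/δ + B²/δ² + 2·sup_{[0,C]} u. -/
set_option maxHeartbeats 1600000


open Filter Set

/-- variant of the viscosity estimate with a square-root term. Under the same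
hypotheses on `P(x,ξ) = ξ² + a(x)ξ + b(x)` with `P_∞(0) < -δ`, there exists `C > 0` such
that any bounded nonnegative continuous `u` with `P(x,∂ₓ)u ≥ -A - B·(sup u)^{1/2}` in the
viscosity sense satisfies `sup u ≤ 2A/δ + B²/δ² + 2·sup_{[0,C]} u`. -/
theorem viscosity_halfline_estimate_sqrt
    (a b : ℝ → ℝ) (ha : Continuous a) (hb : Continuous b)
    (aInf bInf : ℝ)
    (haTo : Tendsto a atTop (nhds aInf)) (hbTo : Tendsto b atTop (nhds bInf))
    (δ : ℝ) (hδ : 0 < δ) (hPInf : bInf < -δ) :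
    ∃ C : ℝ, 0 < C ∧ ∀ A B : ℝ, 0 < A → 0 < B → ∀ u : ℝ → ℝ,
      ContinuousOn u (Ici 0) →
      (∀ x ∈ Ici (0 : ℝ), 0 ≤ u x) →
      BddAbove (u '' Ici 0) →
      (∀ c ∈ Ici (0 : ℝ), ∀ g : ℝ → ℝ, ContDiff ℝ (⊤ : ℕ∞) g →
        (∀ x ∈ Ici (0 : ℝ), u x ≤ g x) → g c = u c →
        -A - B * Real.sqrt (sSup (u '' Ici 0))
          ≤ deriv (deriv g) c + a c * deriv g c + b c * g c) →
      sSup (u '' Ici 0) ≤ 2 * A / δ + B ^ 2 / δ ^ 2 + 2 * sSup (u '' Icc 0 C) := by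
  -- a bound on `a` over `Ici 0`
  obtain ⟨T₁, hT₁⟩ : ∃ T₁ : ℝ, ∀ x ≥ T₁, |a x - aInf| ≤ 1 := by
    have h := Metric.tendsto_nhds.mp haTo 1 one_pos
    rw [eventually_atTop] at h
    obtain ⟨T₁, h⟩ := h
    exact ⟨T₁, fun x hx => le_of_lt (by simpa [Real.dist_eq] using h x hx)⟩
  obtain ⟨K₁, hK₁⟩ := (isCompact_Icc (a := (0:ℝ)) (b := max T₁ 0)).exists_bound_of_continuousOn
    ha.continuousOn
  set K : ℝ := max (max K₁ (|aInf| + 1)) 0 with hKdef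
  have hK0 : 0 ≤ K := le_max_right _ _
  have hK : ∀ x ∈ Ici (0:ℝ), |a x| ≤ K := by
    intro x hx
    by_cases hxT : x ≤ max T₁ 0
    · have := hK₁ x ⟨hx, hxT⟩
      calc |a x| ≤ K₁ := by simpa using this
        _ ≤ K := le_trans (le_max_left _ _) (le_max_left _ _)
    · push_neg at hxT
      have h1 : |a x - aInf| ≤ 1 := hT₁ x (le_of_lt (lt_of_le_of_lt (le_max_left _ _) hxT))
      calc |a x| = |a x - aInf + aInf| := by ring_nf
        _ ≤ |a x - aInf| + |aInf| := abs_add_le _ _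
        _ ≤ 1 + |aInf| := by linarith
        _ ≤ K := le_trans (by rw [add_comm]; exact le_max_right _ _) (le_max_left _ _)
  -- choose T beyond which b ≤ -δ
  obtain ⟨T, hT⟩ : ∃ T : ℝ, ∀ x ≥ T, b x ≤ -δ := by
    have h := (hbTo.eventually_lt_const hPInf)
    rw [eventually_atTop] at h
    obtain ⟨T, h⟩ := h
    exact ⟨T, fun x hx => le_of_lt (h x hx)⟩
  refine ⟨max T 0 + 1, by positivity, ?_⟩
  set C : ℝ := max T 0 + 1 with hCdef
  have hC1 : (1:ℝ) ≤ C := by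
    have := le_max_right T (0:ℝ); simp only [hCdef]; linarith
  intro A B hA hB u hu hu0 hbdd hvisc
  set M := sSup (u '' Ici 0) with hMdef
  set S := sSup (u '' Icc 0 C) with hSdef
  have hne : (u '' Ici 0).Nonempty := ⟨u 0, mem_image_of_mem u (mem_Ici.mpr (le_refl 0))⟩
  have hle : ∀ x ∈ Ici (0:ℝ), u x ≤ M := fun x hx => le_csSup hbdd (mem_image_of_mem u hx)
  have hM0 : 0 ≤ M := le_trans (hu0 0 (mem_Ici.mpr (le_refl 0))) (hle 0 (mem_Ici.mpr (le_refl 0)))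
  have hSbdd : BddAbove (u '' Icc 0 C) := hbdd.mono (image_mono Icc_subset_Ici_self)
  have hS0 : 0 ≤ S := le_trans (hu0 0 (mem_Ici.mpr (le_refl 0)))
    (le_csSup hSbdd (mem_image_of_mem u ⟨le_refl 0, by linarith⟩))
  -- it suffices to prove it up to any η > 0
  by_contra hcon
  push_neg at hcon
  set η : ℝ := (M - (2 * A / δ + B ^ 2 / δ ^ 2 + 2 * S)) / 2 with hηdef
  have hη : 0 < η := by simp only [hηdef]; linarith
  have key : M ≤ 2 * A / δ + B ^ 2 / δ ^ 2 + 2 * S + η := by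
    -- choose ε
    set ε : ℝ := min 1 (δ * η / (2 * (2 + 2 * K + δ))) / 2 with hεdef
    have hεpos : 0 < ε := by
      have : 0 < δ * η / (2 * (2 + 2 * K + δ)) := by positivity
      simp only [hεdef]
      positivity
    have hε1 : ε < 1 := by
      have : min 1 (δ * η / (2 * (2 + 2 * K + δ))) ≤ 1 := min_le_left _ _
      simp only [hεdef]; linarith
    have hεη : ε * (2 + 2 * K + δ) ≤ δ * η / 2 := by
      have h1 : ε ≤ δ * η / (2 * (2 + 2 * K + δ)) := by
        have h2 : min 1 (δ * η / (2 * (2 + 2 * K + δ))) ≤ δ * η / (2 * (2 + 2 * K + δ)) :=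
          min_le_right _ _
        have h3 : 0 < δ * η / (2 * (2 + 2 * K + δ)) := by positivity
        simp only [hεdef]; linarith
      have h4 : 0 < 2 + 2 * K + δ := by linarith
      have h5 : δ * η / (2 * (2 + 2 * K + δ)) * (2 + 2 * K + δ) = δ * η / 2 := by
        field_simp
      linarith [mul_le_mul_of_nonneg_right h1 h4.le]
    by_cases hx0 : ∃ x₀ ∈ Ici C, M - ε ^ 2 < u x₀
    · obtain ⟨x₀, hx₀C, hx₀⟩ := hx0
      have hx₀1 : (1:ℝ) ≤ x₀ := le_trans hC1 hx₀C
      have hsub : Icc (x₀ - 1) (x₀ + 1) ⊆ Ici (0:ℝ) := fun y hy => by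
        simp only [mem_Ici]; have := hy.1; simp only [mem_Icc] at *; linarith
      -- maximize h(x) = u x - ε (x - x₀)² on the compact interval
      have hcont : ContinuousOn (fun x => u x - ε * (x - x₀) ^ 2) (Icc (x₀ - 1) (x₀ + 1)) :=
        (hu.mono hsub).sub (Continuous.continuousOn (continuous_const.mul ((continuous_id.sub continuous_const).pow 2)))
      obtain ⟨c, hcmem, hcmax⟩ := isCompact_Icc.exists_isMaxOn
        ⟨x₀, by constructor <;> linarith⟩ hcont
      have hc0 : (0:ℝ) ≤ c := hsub hcmem
      have hcT : b c ≤ -δ := by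
        apply hT
        have h1 : x₀ - 1 ≤ c := hcmem.1
        have h2 : T ≤ max T 0 := le_max_left _ _
        have : C ≤ x₀ := hx₀C
        simp only [hCdef] at this
        linarith
      have hcd : |c - x₀| ≤ 1 := by
        rw [abs_le]; obtain ⟨h1, h2⟩ := hcmem; constructor <;> linarith
      -- key: h c ≥ h x₀ = u x₀ > M - ε²
      have hhc : M - ε ^ 2 < u c - ε * (c - x₀) ^ 2 := by
        have := isMaxOn_iff.mp hcmax x₀ (show x₀ ∈ Icc (x₀ - 1) (x₀ + 1) by constructor <;> linarith)
        calc M - ε ^ 2 < u x₀ := hx₀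
          _ = u x₀ - ε * (x₀ - x₀) ^ 2 := by ring
          _ ≤ u c - ε * (c - x₀) ^ 2 := this
      have huc : M - ε ^ 2 < u c := by nlinarith [sq_nonneg (c - x₀)]
      -- the test function
      set g : ℝ → ℝ := fun x => ε * (x - x₀) ^ 2 + (u c - ε * (c - x₀) ^ 2) with hgdef
      have hgsm : ContDiff ℝ (⊤ : ℕ∞) g := by
        apply ContDiff.add _ contDiff_const
        exact contDiff_const.mul ((contDiff_id.sub contDiff_const).pow 2)
      have hgu : ∀ x ∈ Ici (0:ℝ), u x ≤ g x := by
        intro x hx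
        by_cases hxI : x ∈ Icc (x₀ - 1) (x₀ + 1)
        · have := isMaxOn_iff.mp hcmax x hxI
          simp only [hgdef]; linarith
        · have h1 : 1 ≤ (x - x₀) ^ 2 := by
            simp only [mem_Icc, not_and_or, not_le] at hxI
            rcases hxI with h | h <;> nlinarith
          have h2 : u x ≤ M := hle x hx
          have h3 : ε * 1 ≤ ε * (x - x₀) ^ 2 := by nlinarith
          simp only [hgdef]
          nlinarith
      have hgc : g c = u c := by simp only [hgdef]; ring
      -- derivatives of g
      have hd : ∀ x : ℝ, HasDerivAt g (2 * ε * (x - x₀)) x := by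
        intro x
        have h1 : HasDerivAt (fun y : ℝ => y - x₀) 1 x := (hasDerivAt_id x).sub_const x₀
        have h2 : HasDerivAt (fun y : ℝ => (y - x₀) ^ 2) (2 * (x - x₀)) x := by
          simpa using h1.fun_pow 2
        have h3 := (h2.const_mul ε).add_const (u c - ε * (c - x₀) ^ 2)
        convert h3 using 1
        exacts [rfl, rfl, by ring]
      have hderiv : deriv g = fun x => 2 * ε * (x - x₀) := funext fun x => (hd x).deriv
      have hd2 : deriv (deriv g) c = 2 * ε := by
        rw [hderiv]
        have h1 : HasDerivAt (fun x : ℝ => 2 * ε * (x - x₀)) (2 * ε * 1) c :=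
          ((hasDerivAt_id c).sub_const x₀).const_mul (2 * ε)
        simpa using h1.deriv
      have hvc := hvisc c hc0 g hgsm hgu hgc
      rw [hd2, (hd c).deriv, hgc] at hvc
      -- bound the terms
      have hac : a c * (2 * ε * (c - x₀)) ≤ 2 * ε * K := by
        have h1 := abs_le.mp (hK c hc0)
        have h2 := abs_le.mp hcd
        nlinarith [mul_nonneg (by linarith : (0:ℝ) ≤ K - a c) (by linarith : (0:ℝ) ≤ 1 + (c - x₀)),
          mul_nonneg (by linarith : (0:ℝ) ≤ K + a c) (by linarith : (0:ℝ) ≤ 1 - (c - x₀))]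
      have hbuc : b c * u c ≤ -δ * (M - ε ^ 2) := by
        have h1 : b c * u c ≤ -δ * u c := mul_le_mul_of_nonneg_right hcT (hu0 c hc0)
        nlinarith
      -- combine
      have hmain : δ * M ≤ A + B * Real.sqrt M + δ * η / 2 := by
        have h5 : -A - B * Real.sqrt M ≤ 2 * ε + 2 * ε * K + -δ * (M - ε ^ 2) := by linarith
        have h6 : ε ^ 2 ≤ ε := by nlinarith
        nlinarith
      -- use AM–GM on the sqrt term
      have hsq : 2 * B * (δ * Real.sqrt M) ≤ B ^ 2 + (δ * Real.sqrt M) ^ 2 :=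
        two_mul_le_add_sq B (δ * Real.sqrt M)
      have hsqM : Real.sqrt M ^ 2 = M := Real.sq_sqrt hM0
      have h7 : δ ^ 2 * M ≤ 2 * δ * A + B ^ 2 + δ ^ 2 * η := by nlinarith
      have h8 : M ≤ (2 * δ * A + B ^ 2 + δ ^ 2 * η) / δ ^ 2 := by
        rw [le_div_iff₀ (by positivity)]; nlinarith
      have h9 : (2 * δ * A + B ^ 2 + δ ^ 2 * η) / δ ^ 2 = 2 * A / δ + B ^ 2 / δ ^ 2 + η := by
        field_simp
      rw [h9] at h8
      linarith
    · -- no large values beyond C: then M ≤ S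
      push_neg at hx0
      have hMS : M ≤ max S (M - ε ^ 2) := by
        apply csSup_le hne
        rintro y ⟨x, hx, rfl⟩
        by_cases hxC : x ≤ C
        · exact le_trans (le_csSup hSbdd (mem_image_of_mem u ⟨hx, hxC⟩)) (le_max_left _ _)
        · push_neg at hxC
          exact le_trans (hx0 x (le_of_lt hxC)) (le_max_right _ _)
      rcases le_max_iff.mp hMS with h | h
      · have h1 : 0 < 2 * A / δ := by positivity
        have h2 : 0 < B ^ 2 / δ ^ 2 := by positivity
        linarith
      · nlinarith
  linarith
end

section
/- Let E be a real vector space with a symmetric bilinear form b of signature (p, q+1), and let x, y, z be three distinct isotropic lines in E spanning a subspace V = x ⊕ y ⊕ z of dimension 3. Choose nonzero representatives x̂ ∈ x, ŷ ∈ y, ẑ ∈ z. Then the determinant of the Gram matrix of (x̂, ŷ, ẑ) equals 2·b(x̂,ŷ)·b(ŷ,ẑ)·b(x̂,ẑ). Moreover, if b(x̂,ŷ) ≤ 0, b(ŷ,ẑ) ≤ 0, and b(x̂,ẑ) ≤ 0, then V contains no negative-definite 2-plane. -/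
open Submodule Module

private lemma aux_range3 {E : Type*} (x y z : E) :
    Set.range ![x, y, z] = ({x, y, z} : Set E) := by
  ext t
  simp [Matrix.range_cons, Matrix.range_empty]
  tauto

private lemma aux_inter {E : Type*} [AddCommGroup E] [Module ℝ E]
    (x y z : E) (hind : LinearIndependent ℝ ![x, y, z])
    (W : Submodule ℝ E) (hW : W ≤ Submodule.span ℝ {x, y, z})
    (hdim : Module.finrank ℝ W = 2) :
    ∃ a b : ℝ, a • x + b • y ∈ W ∧ a • x + b • y ≠ 0 := by
  have hxy : LinearIndependent ℝ ![x, y] := by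
    have h := hind.comp ![0, 1] (by decide)
    have : ![x, y, z] ∘ ![(0 : Fin 3), 1] = ![x, y] := by
      funext i; fin_cases i <;> rfl
    rwa [this] at h
  haveI hFD : FiniteDimensional ℝ (span ℝ ({x, y, z} : Set E)) :=
    FiniteDimensional.span_of_finite ℝ (Set.toFinite _)
  set U : Submodule ℝ E := span ℝ ({x, y} : Set E) with hUdef
  have hU : U ≤ span ℝ ({x, y, z} : Set E) :=
    span_mono (by intro t ht; simp at ht ⊢; tauto)
  haveI : FiniteDimensional ℝ W := Submodule.finiteDimensional_of_le hW
  haveI : FiniteDimensional ℝ U := Submodule.finiteDimensional_of_le hU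
  have hUrank : finrank ℝ U = 2 := by
    have h2 : ({x, y} : Set E) = Set.range ![x, y] := by
      ext t; simp [Matrix.range_cons, Matrix.range_empty]; tauto
    rw [hUdef, h2, finrank_span_eq_card hxy]; simp
  have hVrank : finrank ℝ (span ℝ ({x, y, z} : Set E)) = 3 := by
    rw [← aux_range3 x y z, finrank_span_eq_card hind]; simp
  have hsup : finrank ℝ ↥(W ⊔ U) ≤ 3 := by
    rw [← hVrank]
    exact Submodule.finrank_mono (sup_le hW hU)
  have heq := Submodule.finrank_sup_add_finrank_inf_eq W U
  rw [hdim, hUrank] at heq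
  have hinf : 0 < finrank ℝ ↥(W ⊓ U) := by omega
  have hne : (W ⊓ U) ≠ ⊥ := by
    intro h
    rw [h, finrank_bot] at hinf
    exact lt_irrefl 0 hinf
  obtain ⟨w, hwmem, hwne⟩ := Submodule.exists_mem_ne_zero_of_ne_bot hne
  obtain ⟨a, b, hab⟩ := Submodule.mem_span_pair.mp hwmem.2
  exact ⟨a, b, by rw [hab]; exact hwmem.1, by rw [hab]; exact hwne⟩

set_option maxHeartbeats 1000000 in
/-- for three linearly independent isotropic vectors `x, y, z` (spanning the
3-dimensional space `V`) of a symmetric bilinear form `B`, the Gram determinant equals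
`2·B(x,y)·B(y,z)·B(x,z)`; moreover if the three pairwise products are `≤ 0` then `V`
contains no negative-definite 2-plane. -/
theorem gram_det_isotropic_triple
    {E : Type*} [AddCommGroup E] [Module ℝ E]
    (B : E →ₗ[ℝ] E →ₗ[ℝ] ℝ) (hsymm : ∀ u v : E, B u v = B v u)
    (x y z : E) (hind : LinearIndependent ℝ ![x, y, z])
    (hx : B x x = 0) (hy : B y y = 0) (hz : B z z = 0) :
    (Matrix.det !![B x x, B x y, B x z; B y x, B y y, B y z; B z x, B z y, B z z]
        = 2 * B x y * B y z * B x z) ∧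
    (B x y ≤ 0 → B y z ≤ 0 → B x z ≤ 0 →
      ∀ W : Submodule ℝ E, W ≤ Submodule.span ℝ {x, y, z} →
        Module.finrank ℝ W = 2 →
        ¬ (∀ w : E, w ∈ W → w ≠ 0 → B w w < 0)) := by
  constructor
  · rw [Matrix.det_fin_three]
    simp [hx, hy, hz, hsymm y x, hsymm z x, hsymm z y]
    ring
  intro hp hq hr W hW hdim hneg
  haveI : FiniteDimensional ℝ (span ℝ ({x, y, z} : Set E)) :=
    FiniteDimensional.span_of_finite ℝ (Set.toFinite _)
  haveI : FiniteDimensional ℝ W := Submodule.finiteDimensional_of_le hW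
  -- permuted independence
  have hind2 : LinearIndependent ℝ ![y, z, x] := by
    have h := hind.comp ![1, 2, 0] (by decide)
    have : ![x, y, z] ∘ ![(1 : Fin 3), 2, 0] = ![y, z, x] := by
      funext i; fin_cases i <;> rfl
    rwa [this] at h
  have hind3 : LinearIndependent ℝ ![x, z, y] := by
    have h := hind.comp ![0, 2, 1] (by decide)
    have : ![x, y, z] ∘ ![(0 : Fin 3), 2, 1] = ![x, z, y] := by
      funext i; fin_cases i <;> rfl
    rwa [this] at h
  have hset2 : ({y, z, x} : Set E) = {x, y, z} := by ext t; simp; tauto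
  have hset3 : ({x, z, y} : Set E) = {x, y, z} := by ext t; simp; tauto
  obtain ⟨a, b, hw1, hw1ne⟩ := aux_inter x y z hind W hW hdim
  obtain ⟨b', c', hw2, hw2ne⟩ := aux_inter y z x hind2 W (by rw [hset2]; exact hW) hdim
  obtain ⟨a'', c'', hw3, hw3ne⟩ := aux_inter x z y hind3 W (by rw [hset3]; exact hW) hdim
  -- values of the form
  have hQ1 : B (a • x + b • y) (a • x + b • y) = 2 * (a * b) * B x y := by
    simp [map_add, map_smul, hx, hy, hsymm y x]; ring
  have hQ2 : B (b' • y + c' • z) (b' • y + c' • z) = 2 * (b' * c') * B y z := by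
    simp [map_add, map_smul, hy, hz, hsymm z y]; ring
  have hQ3 : B (a'' • x + c'' • z) (a'' • x + c'' • z) = 2 * (a'' * c'') * B x z := by
    simp [map_add, map_smul, hx, hz, hsymm z x]; ring
  have hN1 := hneg _ hw1 hw1ne
  have hN2 := hneg _ hw2 hw2ne
  have hN3 := hneg _ hw3 hw3ne
  rw [hQ1] at hN1; rw [hQ2] at hN2; rw [hQ3] at hN3
  have hab : 0 < a * b := by nlinarith
  have hbc : 0 < b' * c' := by nlinarith
  have hac : 0 < a'' * c'' := by nlinarith
  -- the three vectors as elements of W are linearly dependent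
  set v : Fin 3 → W := ![⟨_, hw1⟩, ⟨_, hw2⟩, ⟨_, hw3⟩] with hv
  have hdep : ¬ LinearIndependent ℝ v := by
    intro h
    have := h.fintype_card_le_finrank
    rw [hdim] at this
    simp at this
  obtain ⟨g, hgsum, i0, hgi0⟩ := Fintype.not_linearIndependent_iff.mp hdep
  set α := g 0 with hα
  set β := g 1 with hβ
  set γ := g 2 with hγ
  have hsum : α • (a • x + b • y) + β • (b' • y + c' • z) + γ • (a'' • x + c'' • z) = 0 := by
    have := congrArg (Subtype.val) hgsum
    rw [Fin.sum_univ_three] at this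
    simpa [hv] using this
  have hcomb : ∑ i, ![α * a + γ * a'', α * b + β * b', β * c' + γ * c''] i • ![x, y, z] i
      = 0 := by
    rw [Fin.sum_univ_three]
    simp only [Matrix.cons_val_zero, Matrix.cons_val_one, Matrix.head_cons,
      Matrix.cons_val_two, Matrix.tail_cons]
    rw [← hsum]
    module
  have hcoef := Fintype.linearIndependent_iff.mp hind _ hcomb
  have e1 : α * a + γ * a'' = 0 := by simpa using hcoef 0
  have e2 : α * b + β * b' = 0 := by simpa using hcoef 1
  have e3 : β * c' + γ * c'' = 0 := by simpa using hcoef 2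
  have ha : a ≠ 0 := fun h => by rw [h] at hab; simp at hab
  have hb : b ≠ 0 := fun h => by rw [h] at hab; simp at hab
  have hb' : b' ≠ 0 := fun h => by rw [h] at hbc; simp at hbc
  have hc' : c' ≠ 0 := fun h => by rw [h] at hbc; simp at hbc
  have ha'' : a'' ≠ 0 := fun h => by rw [h] at hac; simp at hac
  have hc'' : c'' ≠ 0 := fun h => by rw [h] at hac; simp at hac
  have hne : α ≠ 0 ∨ β ≠ 0 ∨ γ ≠ 0 := by
    fin_cases i0 <;> simp_all <;> tauto
  by_cases hα0 : α = 0
  · have hβ0 : β = 0 := by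
      have : β * b' = 0 := by rw [hα0] at e2; linarith
      exact (mul_eq_zero.mp this).resolve_right hb'
    have hγ0 : γ = 0 := by
      have : γ * c'' = 0 := by rw [hβ0] at e3; linarith
      exact (mul_eq_zero.mp this).resolve_right hc''
    rcases hne with h | h | h <;> [exact h hα0; exact h hβ0; exact h hγ0]
  · have hβ0 : β ≠ 0 := by
      intro h
      have : α * b = 0 := by rw [h] at e2; linarith
      exact hα0 ((mul_eq_zero.mp this).resolve_right hb)
    have hγ0 : γ ≠ 0 := by
      intro h
      have : β * c' = 0 := by rw [h] at e3; linarith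
      exact hβ0 ((mul_eq_zero.mp this).resolve_right hc')
    have k1 : α * a = -(γ * a'') := by linarith
    have k2 : β * b' = -(α * b) := by linarith
    have k3 : γ * c'' = -(β * c') := by linarith
    have key : (α * β * γ) * (a * b' * c'') = -((α * β * γ) * (a'' * b * c')) := by
      calc (α * β * γ) * (a * b' * c'') = (α * a) * (β * b') * (γ * c'') := by ring
        _ = (-(γ * a'')) * (-(α * b)) * (-(β * c')) := by rw [k1, k2, k3]
        _ = -((α * β * γ) * (a'' * b * c')) := by ring
    have habg : α * β * γ ≠ 0 := by
      exact mul_ne_zero (mul_ne_zero hα0 hβ0) hγ0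
    have key2 : a * b' * c'' = -(a'' * b * c') := by
      have h2 : (α * β * γ) * (a * b' * c'') = (α * β * γ) * (-(a'' * b * c')) := by
        linear_combination key
      exact mul_left_cancel₀ habg h2
    have hpos : 0 < (a * b' * c'') * (a'' * b * c') := by
      have h3 : (a * b' * c'') * (a'' * b * c') = (a * b) * (b' * c') * (a'' * c'') := by ring
      rw [h3]
      exact mul_pos (mul_pos hab hbc) hac
    have h4 : (a * b' * c'') * (a'' * b * c') = -((a'' * b * c') ^ 2) := by
      rw [key2]; ring
    rw [h4] at hpos
    nlinarith [sq_nonneg (a'' * b * c')]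
end

section
/- Let (g_n) be an unbounded sequence in the orthogonal group O(p,q) of a nondegenerate symmetric bilinear form B of signature (p,q) on a real vector space F. Then, after extracting a subsequence, there exists a sequence (μ_n) of positive real numbers tending to +∞ such that exp(-μ_n)·g_n converges in End(F) to a nonzero linear map φ whose kernel is a degenerate subspace of F (i.e., B restricted to ker φ is degenerate) and whose image is totally isotropic (B vanishes identically on im φ). -/
open Filter

set_option maxHeartbeats 2000000 in
/-- an unbounded sequence in the orthogonal group of a nondegenerate symmetric
bilinear form `B`, after extraction and rescaling by `exp(-μₙ)` with `μₙ → +∞`, converges to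
a nonzero endomorphism `φ` whose kernel is a degenerate subspace and whose image is totally
isotropic. -/
theorem unbounded_orthogonal_sequence_rescaled_limit
    {F : Type*} [NormedAddCommGroup F] [NormedSpace ℝ F] [FiniteDimensional ℝ F]
    (B : F →ₗ[ℝ] F →ₗ[ℝ] ℝ) (hsymm : ∀ u v : F, B u v = B v u)
    (hnd : ∀ u : F, (∀ v : F, B u v = 0) → u = 0)
    (g : ℕ → F →L[ℝ] F)
    (hortho : ∀ n : ℕ, ∀ u v : F, B (g n u) (g n v) = B u v)
    (hunb : ¬ ∃ K : ℝ, ∀ n : ℕ, ‖g n‖ ≤ K) :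
    ∃ ψ : ℕ → ℕ, StrictMono ψ ∧
    ∃ μ : ℕ → ℝ, (∀ n, 0 < μ n) ∧ Tendsto μ atTop atTop ∧
    ∃ φ : F →L[ℝ] F, φ ≠ 0 ∧
      Tendsto (fun n => Real.exp (-μ n) • g (ψ n)) atTop (nhds φ) ∧
      (∃ v : F, φ v = 0 ∧ v ≠ 0 ∧ ∀ w : F, φ w = 0 → B v w = 0) ∧
      (∀ u v : F, B (φ u) (φ v) = 0) := by
  classical
  -- continuous bilinear version of B
  let B' : F →ₗ[ℝ] (F →L[ℝ] ℝ) :=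
    (LinearMap.toContinuousLinearMap :
      (F →ₗ[ℝ] ℝ) ≃ₗ[ℝ] (F →L[ℝ] ℝ)).toLinearMap.comp B
  let Bc : F →L[ℝ] (F →L[ℝ] ℝ) := LinearMap.toContinuousLinearMap B'
  have hBc : ∀ x y : F, Bc x y = B x y := fun x y => rfl
  have hB2 : Continuous fun p : F × F => B p.1 p.2 := by
    have := Bc.continuous₂
    exact this
  -- each g n is injective, hence bijective; build inverses
  have hinjker : ∀ n, LinearMap.ker ((g n : F →ₗ[ℝ] F)) = ⊥ := by
    intro n
    rw [LinearMap.ker_eq_bot']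
    intro u hu
    apply hnd u
    intro v
    have := hortho n u v
    simp only [ContinuousLinearMap.coe_coe] at hu
    rw [← this, hu]
    simp
  have hinj : ∀ n, Function.Injective (g n : F →ₗ[ℝ] F) := fun n =>
    LinearMap.ker_eq_bot.mp (hinjker n)
  have hsurj : ∀ n, Function.Surjective (g n : F →ₗ[ℝ] F) := fun n =>
    LinearMap.injective_iff_surjective.mp (hinj n)
  let e : ℕ → F ≃ₗ[ℝ] F := fun n =>
    LinearEquiv.ofBijective (g n : F →ₗ[ℝ] F) ⟨hinj n, hsurj n⟩
  let h : ℕ → F →L[ℝ] F := fun n => LinearMap.toContinuousLinearMap (e n).symm.toLinearMap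
  have hgh : ∀ n v, g n (h n v) = v := fun n v => (e n).apply_symm_apply v
  -- adjoint identity and orthogonality of h
  have hadj : ∀ n u v, B (g n u) v = B u (h n v) := by
    intro n u v
    conv_lhs => rw [← hgh n v]
    exact hortho n u (h n v)
  have horthoh : ∀ n u v, B (h n u) (h n v) = B u v := by
    intro n u v
    have := hortho n (h n u) (h n v)
    rw [hgh, hgh] at this
    exact this.symm
  -- extraction of a subsequence with norms going to infinity
  have hfreq : ∀ N : ℕ, ∃ᶠ k in atTop, (N : ℝ) + 1 < ‖g k‖ := by
    intro N
    by_contra hcon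
    rw [not_frequently] at hcon
    rw [eventually_atTop] at hcon
    obtain ⟨M, hM⟩ := hcon
    apply hunb
    refine ⟨((N : ℝ) + 1) + ∑ k ∈ Finset.range M, ‖g k‖, fun k => ?_⟩
    rcases lt_or_ge k M with hk | hk
    · have h1 : ‖g k‖ ≤ ∑ j ∈ Finset.range M, ‖g j‖ :=
        Finset.single_le_sum (fun j _ => norm_nonneg (g j)) (Finset.mem_range.mpr hk)
      have h2 : (0 : ℝ) ≤ (N : ℝ) + 1 := by positivity
      linarith
    · have h1 := hM k hk
      rw [not_lt] at h1
      have h2 : (0 : ℝ) ≤ ∑ j ∈ Finset.range M, ‖g j‖ :=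
        Finset.sum_nonneg fun j _ => norm_nonneg (g j)
      linarith
  obtain ⟨ψ₀, hψ₀mono, hψ₀⟩ := Filter.extraction_forall_of_frequently hfreq
  -- rescaled sequences
  set r : ℕ → ℝ := fun n => ‖g (ψ₀ n)‖ with hr_def
  have hr1 : ∀ n, 1 < r n := by
    intro n
    have := hψ₀ n
    have h0 : (0 : ℝ) ≤ (n : ℝ) := Nat.cast_nonneg n
    linarith
  have hr0 : ∀ n, 0 < r n := fun n => lt_trans one_pos (hr1 n)
  set c : ℕ → ℝ := fun n => Real.exp (-Real.log (r n)) with hc_def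
  have hc_eq : ∀ n, c n = (r n)⁻¹ := by
    intro n
    rw [hc_def]
    simp only
    rw [Real.exp_neg, Real.exp_log (hr0 n)]
  have hc_pos : ∀ n, 0 < c n := fun n => Real.exp_pos _
  set u : ℕ → F →L[ℝ] F := fun n => c n • g (ψ₀ n) with hu_def
  set v : ℕ → F →L[ℝ] F := fun n => c n • h (ψ₀ n) with hv_def
  have hu_norm : ∀ n, ‖u n‖ = 1 := by
    intro n
    rw [hu_def]
    show ‖c n • g (ψ₀ n)‖ = 1
    rw [norm_smul (c n) (g (ψ₀ n)), Real.norm_eq_abs, abs_of_pos (hc_pos n), hc_eq n]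
    exact inv_mul_cancel₀ (ne_of_gt (hr0 n))
  -- antilipschitz constant for B'
  have hB'ker : LinearMap.ker B' = ⊥ := by
    rw [LinearMap.ker_eq_bot']
    intro x hx
    apply hnd x
    intro y
    have : Bc x y = 0 := by
      rw [show Bc x = B' x from rfl, hx]; rfl
    rwa [hBc] at this
  obtain ⟨K, hK0, hKa⟩ := B'.exists_antilipschitzWith hB'ker
  have hanti : ∀ x : F, ‖x‖ ≤ (K : ℝ) * ‖Bc x‖ := by
    intro x
    have := hKa.le_mul_dist x 0
    simp [dist_eq_norm, map_zero] at this; exact this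
  -- bound on the norm of h n in terms of the norm of g n
  have hh_bound : ∀ n y, ‖h n y‖ ≤ (K : ℝ) * ‖Bc‖ * (‖g n‖ * ‖y‖) := by
    intro n y
    have h1 : ‖Bc (h n y)‖ ≤ ‖Bc‖ * ‖g n‖ * ‖y‖ := by
      apply ContinuousLinearMap.opNorm_le_bound _ (by positivity)
      intro z
      have heq : Bc (h n y) z = Bc (g n z) y := by
        rw [hBc, hBc, hsymm, hadj]
      rw [heq]
      calc |Bc (g n z) y| ≤ ‖Bc (g n z)‖ * ‖y‖ := (Bc (g n z)).le_opNorm y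
        _ ≤ (‖Bc‖ * ‖g n z‖) * ‖y‖ := by
            apply mul_le_mul_of_nonneg_right (Bc.le_opNorm _) (norm_nonneg y)
        _ ≤ (‖Bc‖ * (‖g n‖ * ‖z‖)) * ‖y‖ := by
            apply mul_le_mul_of_nonneg_right _ (norm_nonneg y)
            exact mul_le_mul_of_nonneg_left ((g n).le_opNorm z) (norm_nonneg Bc)
        _ = ‖Bc‖ * ‖g n‖ * ‖y‖ * ‖z‖ := by ring
    calc ‖h n y‖ ≤ (K : ℝ) * ‖Bc (h n y)‖ := hanti _
      _ ≤ (K : ℝ) * (‖Bc‖ * ‖g n‖ * ‖y‖) := by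
          apply mul_le_mul_of_nonneg_left h1 K.coe_nonneg
      _ = (K : ℝ) * ‖Bc‖ * (‖g n‖ * ‖y‖) := by ring
  have hv_norm : ∀ n, ‖v n‖ ≤ (K : ℝ) * ‖Bc‖ := by
    intro n
    rw [hv_def]
    show ‖c n • h (ψ₀ n)‖ ≤ (K : ℝ) * ‖Bc‖
    rw [norm_smul (c n) (h (ψ₀ n)), Real.norm_eq_abs, abs_of_pos (hc_pos n)]
    have h1 : ‖h (ψ₀ n)‖ ≤ (K : ℝ) * ‖Bc‖ * ‖g (ψ₀ n)‖ := by
      apply ContinuousLinearMap.opNorm_le_bound _ (by positivity)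
      intro y
      have := hh_bound (ψ₀ n) y
      calc ‖h (ψ₀ n) y‖ ≤ (K : ℝ) * ‖Bc‖ * (‖g (ψ₀ n)‖ * ‖y‖) := this
        _ = (K : ℝ) * ‖Bc‖ * ‖g (ψ₀ n)‖ * ‖y‖ := by ring
    calc c n * ‖h (ψ₀ n)‖ ≤ c n * ((K : ℝ) * ‖Bc‖ * ‖g (ψ₀ n)‖) :=
          mul_le_mul_of_nonneg_left h1 (le_of_lt (hc_pos n))
      _ = (c n * r n) * ((K : ℝ) * ‖Bc‖) := by rw [hr_def]; ring
      _ = (K : ℝ) * ‖Bc‖ := by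
          rw [hc_eq, inv_mul_cancel₀ (ne_of_gt (hr0 n)), one_mul]
  -- Bolzano–Weierstrass on the pair sequence
  set R : ℝ := max 1 ((K : ℝ) * ‖Bc‖) with hR_def
  have hxmem : ∀ n, (u n, v n) ∈ Metric.closedBall (0 : (F →L[ℝ] F) × (F →L[ℝ] F)) R := by
    intro n
    rw [Metric.mem_closedBall, dist_zero_right, Prod.norm_def]
    apply max_le
    · rw [hu_norm n]; exact le_max_left _ _
    · exact le_trans (hv_norm n) (le_max_right _ _)
  obtain ⟨a, -, σ, hσmono, hσtend⟩ :=
    tendsto_subseq_of_bounded Metric.isBounded_closedBall hxmem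
  set φ : F →L[ℝ] F := a.1 with hφ_def
  set φs : F →L[ℝ] F := a.2 with hφs_def
  have htendφ : Tendsto (fun n => u (σ n)) atTop (nhds φ) := by
    have := (continuous_fst.tendsto a).comp hσtend
    exact this
  have htendφs : Tendsto (fun n => v (σ n)) atTop (nhds φs) := by
    have := (continuous_snd.tendsto a).comp hσtend
    exact this
  -- pointwise convergence
  have happlyφ : ∀ x : F, Tendsto (fun n => u (σ n) x) atTop (nhds (φ x)) := by
    intro x
    exact ((ContinuousLinearMap.apply ℝ F x).continuous.tendsto φ).comp htendφ
  have happlyφs : ∀ x : F, Tendsto (fun n => v (σ n) x) atTop (nhds (φs x)) := by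
    intro x
    exact ((ContinuousLinearMap.apply ℝ F x).continuous.tendsto φs).comp htendφs
  have hBlim : ∀ (a b : ℕ → F) (aL bL : F),
      Tendsto a atTop (nhds aL) → Tendsto b atTop (nhds bL) →
      Tendsto (fun n => B (a n) (b n)) atTop (nhds (B aL bL)) := by
    intro a b aL bL ha hb
    exact (hB2.tendsto (aL, bL)).comp (ha.prodMk_nhds hb)
  -- the c (σ n)^2 * B x y terms go to 0
  have hsq0 : ∀ t : ℝ, Tendsto (fun n => c (σ n) ^ 2 * t) atTop (nhds 0) := by
    intro t
    apply squeeze_zero_norm (a := fun n : ℕ => |t| * (1 / ((n : ℝ) + 1)))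
    · intro n
      have hcle : c (σ n) ≤ 1 / ((n : ℝ) + 1) := by
        rw [hc_eq, one_div]
        have h1 : (n : ℝ) + 1 ≤ r (σ n) := by
          have h2 := hψ₀ (σ n)
          have h3 : (n : ℝ) ≤ (σ n : ℝ) := Nat.cast_le.mpr (hσmono.le_apply)
          linarith
        exact inv_anti₀ (by positivity) h1
      have hc1 : c (σ n) ≤ 1 := le_trans hcle (by
        rw [div_le_one (by positivity)]; have : (0:ℝ) ≤ (n:ℝ) := Nat.cast_nonneg n; linarith)
      have hsqle : c (σ n) ^ 2 ≤ 1 / ((n : ℝ) + 1) := by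
        calc c (σ n) ^ 2 = c (σ n) * c (σ n) := by ring
          _ ≤ 1 * c (σ n) := mul_le_mul_of_nonneg_right hc1 (le_of_lt (hc_pos _))
          _ = c (σ n) := one_mul _
          _ ≤ 1 / ((n : ℝ) + 1) := hcle
      rw [norm_mul, Real.norm_eq_abs, Real.norm_eq_abs,
        abs_of_nonneg (sq_nonneg (c (σ n)) : (0:ℝ) ≤ _), mul_comm]
      exact mul_le_mul_of_nonneg_left hsqle (abs_nonneg t)
    · have h0 : Tendsto (fun n : ℕ => 1 / ((n : ℝ) + 1)) atTop (nhds 0) :=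
        tendsto_one_div_add_atTop_nhds_zero_nat
      have := h0.const_mul |t|
      simpa using this
  -- key identities
  have hu_apply : ∀ m x, u m x = c m • (g (ψ₀ m) x) := fun m x => rfl
  have hv_apply : ∀ m x, v m x = c m • (h (ψ₀ m) x) := fun m x => rfl
  have hadj_lim : ∀ x y : F, B (φ x) y = B x (φs y) := by
    intro x y
    have h1 : Tendsto (fun n => B (u (σ n) x) y) atTop (nhds (B (φ x) y)) :=
      hBlim _ _ _ _ (happlyφ x) tendsto_const_nhds
    have h2 : (fun n => B (u (σ n) x) y) = fun n => B x (v (σ n) y) := by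
      funext n
      rw [hu_apply, hv_apply]
      simp only [map_smul, LinearMap.smul_apply, smul_eq_mul]
      rw [hadj]
    have h3 : Tendsto (fun n => B x (v (σ n) y)) atTop (nhds (B x (φs y))) :=
      hBlim _ _ _ _ tendsto_const_nhds (happlyφs y)
    rw [h2] at h1
    exact tendsto_nhds_unique h1 h3
  have hiso : ∀ x y : F, B (φ x) (φ y) = 0 := by
    intro x y
    have h1 : Tendsto (fun n => B (u (σ n) x) (u (σ n) y)) atTop (nhds (B (φ x) (φ y))) :=
      hBlim _ _ _ _ (happlyφ x) (happlyφ y)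
    have h2 : (fun n => B (u (σ n) x) (u (σ n) y)) = fun n => c (σ n) ^ 2 * B x y := by
      funext n
      rw [hu_apply, hu_apply]
      simp only [map_smul, LinearMap.smul_apply, smul_eq_mul]
      rw [hortho]
      ring
    rw [h2] at h1
    exact tendsto_nhds_unique h1 (hsq0 (B x y))
  have hiso_s : ∀ x y : F, B (φs x) (φs y) = 0 := by
    intro x y
    have h1 : Tendsto (fun n => B (v (σ n) x) (v (σ n) y)) atTop (nhds (B (φs x) (φs y))) :=
      hBlim _ _ _ _ (happlyφs x) (happlyφs y)
    have h2 : (fun n => B (v (σ n) x) (v (σ n) y)) = fun n => c (σ n) ^ 2 * B x y := by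
      funext n
      rw [hv_apply, hv_apply]
      simp only [map_smul, LinearMap.smul_apply, smul_eq_mul]
      rw [horthoh]
      ring
    rw [h2] at h1
    exact tendsto_nhds_unique h1 (hsq0 (B x y))
  -- φ is nonzero
  have hφnorm : ‖φ‖ = 1 := by
    have h1 : Tendsto (fun n => ‖u (σ n)‖) atTop (nhds ‖φ‖) :=
      (continuous_norm.tendsto φ).comp htendφ
    have h2 : (fun n => ‖u (σ n)‖) = fun _ => (1 : ℝ) := by
      funext n; exact hu_norm (σ n)
    rw [h2] at h1
    exact tendsto_nhds_unique h1 tendsto_const_nhds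
  have hφne : φ ≠ 0 := by
    intro hc
    rw [hc, norm_zero] at hφnorm
    exact one_ne_zero hφnorm.symm
  -- a nonzero vector in the image of φs, which lies in ker φ
  obtain ⟨x₀, hx₀⟩ : ∃ x : F, φ x ≠ 0 := by
    by_contra hcon
    push_neg at hcon
    exact hφne (ContinuousLinearMap.ext fun x => by rw [hcon x]; rfl)
  obtain ⟨y₀, hy₀⟩ : ∃ y : F, B (φ x₀) y ≠ 0 := by
    by_contra hcon
    push_neg at hcon
    exact hx₀ (hnd _ hcon)
  have hφsy₀ : φs y₀ ≠ 0 := by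
    intro hc
    apply hy₀
    rw [hadj_lim x₀ y₀, hc]
    simp
  have hker : φ (φs y₀) = 0 := by
    apply hnd
    intro z
    rw [hadj_lim]
    exact hiso_s y₀ z
  -- assemble everything
  refine ⟨ψ₀ ∘ σ, hψ₀mono.comp hσmono, fun n => Real.log (r (σ n)), ?_, ?_, φ, hφne, ?_, ?_, hiso⟩
  · intro n
    exact Real.log_pos (hr1 (σ n))
  · apply tendsto_atTop_mono (f := fun n : ℕ => Real.log ((n : ℝ) + 1))
    · intro n
      apply Real.log_le_log (by positivity)
      have h2 := hψ₀ (σ n)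
      have h3 : (n : ℝ) ≤ (σ n : ℝ) := Nat.cast_le.mpr (hσmono.le_apply)
      linarith
    · apply Real.tendsto_log_atTop.comp
      apply tendsto_atTop_add_const_right
      exact tendsto_natCast_atTop_atTop
  · exact htendφ
  · exact ⟨φs y₀, hker, hφsy₀, fun w hw => by rw [hsymm, ← hadj_lim w y₀, hw]; simp⟩
end

section
/- With stereographic projection conventions, for u in the open unit ball B^p ⊂ R^p one has cos(d_S(0, u)) = (1 − ‖u‖²)/(1 + ‖u‖²), where d_S denotes the spherical distance on the open hemisphere S^p_+ pulled back to B^p via stereographic projection σ : S^p_+ → B^p. Consequently, if M ⊂ Q^{p,q} is the image under Φ̂(u,w) = (2u/(1−‖u‖²), ((1+‖u‖²)/(1−‖u‖²))w) of the graph of a strictly 1-Lipschitz map φ : B^p → S^q (with respect to the spherical distance on B^p), then for any two points x̂₁ = Φ̂(0, N), x̂₂ = Φ̂(u, φ(u)) with u ≠ 0 and φ(0) = N, one has b(x̂₁, x̂₂) < −1. -/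
open scoped RealInnerProductSpace

/-- Inverse stereographic projection `B^p → S^p ⊂ ℝ^p × ℝ`:
`ι(u) = (2u/(1+‖u‖²), (1-‖u‖²)/(1+‖u‖²))`. -/
noncomputable def invStereo (p : ℕ) (u : EuclideanSpace ℝ (Fin p)) :
    EuclideanSpace ℝ (Fin p) × ℝ :=
  ((2 / (1 + ‖u‖ ^ 2)) • u, (1 - ‖u‖ ^ 2) / (1 + ‖u‖ ^ 2))

/-- The spherical distance on the ball `B^p`, pulled back from the hemisphere via
stereographic projection. -/
noncomputable def ballSphericalDist (p : ℕ) (u v : EuclideanSpace ℝ (Fin p)) : ℝ :=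
  Real.arccos (⟪(invStereo p u).1, (invStereo p v).1⟫ + (invStereo p u).2 * (invStereo p v).2)

/-- The bilinear form of signature `(p, q+1)` on `ℝ^p ⊕ W`, `W = ℝ^{q+1}`. -/
noncomputable def pseudoForm15 (p q : ℕ)
    (x y : EuclideanSpace ℝ (Fin p) × EuclideanSpace ℝ (Fin (q + 1))) : ℝ :=
  ⟪x.1, y.1⟫ - ⟪x.2, y.2⟫

/-- The Fermi parametrisation `Φ̂(u,w) = (2u/(1-‖u‖²), ((1+‖u‖²)/(1-‖u‖²))·w)`. -/
noncomputable def fermiParam15 (p q : ℕ)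
    (u : EuclideanSpace ℝ (Fin p)) (w : EuclideanSpace ℝ (Fin (q + 1))) :
    EuclideanSpace ℝ (Fin p) × EuclideanSpace ℝ (Fin (q + 1)) :=
  ((2 / (1 - ‖u‖ ^ 2)) • u, ((1 + ‖u‖ ^ 2) / (1 - ‖u‖ ^ 2)) • w)

/-- (a) `cos(d_S(0,u)) = (1-‖u‖²)/(1+‖u‖²)` for the pulled-back spherical
distance on the ball; (b) consequently, the graph in the quadric of a strictly 1-Lipschitz
map `φ : B^p → S^q` with `φ(0) = N` satisfies `b(Φ̂(0,N), Φ̂(u,φ(u))) < -1` for `u ≠ 0`. -/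
theorem stereographic_cos_formula_and_strict_graph
    (p q : ℕ) :
    (∀ u : EuclideanSpace ℝ (Fin p), ‖u‖ < 1 →
      Real.cos (ballSphericalDist p 0 u) = (1 - ‖u‖ ^ 2) / (1 + ‖u‖ ^ 2)) ∧
    (∀ φ : EuclideanSpace ℝ (Fin p) → EuclideanSpace ℝ (Fin (q + 1)),
      (∀ u, ‖u‖ < 1 → ‖φ u‖ = 1) →
      (∀ u v, ‖u‖ < 1 → ‖v‖ < 1 → u ≠ v →
        Real.arccos ⟪φ u, φ v⟫ < ballSphericalDist p u v) →
      ∀ N : EuclideanSpace ℝ (Fin (q + 1)), φ 0 = N →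
      ∀ u : EuclideanSpace ℝ (Fin p), ‖u‖ < 1 → u ≠ 0 →
        pseudoForm15 p q (fermiParam15 p q 0 N) (fermiParam15 p q u (φ u)) < -1) := by
  have key : ∀ u : EuclideanSpace ℝ (Fin p),
      ballSphericalDist p 0 u = Real.arccos ((1 - ‖u‖ ^ 2) / (1 + ‖u‖ ^ 2)) := by
    intro u
    simp [ballSphericalDist, invStereo]
  have hbound : ∀ u : EuclideanSpace ℝ (Fin p),
      -1 ≤ (1 - ‖u‖ ^ 2) / (1 + ‖u‖ ^ 2) ∧ (1 - ‖u‖ ^ 2) / (1 + ‖u‖ ^ 2) ≤ 1 := by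
    intro u
    have h1 : (0:ℝ) < 1 + ‖u‖ ^ 2 := by positivity
    constructor
    · rw [le_div_iff₀ h1]; nlinarith [sq_nonneg ‖u‖]
    · rw [div_le_one h1]; nlinarith [sq_nonneg ‖u‖]
  constructor
  · intro u hu
    rw [key, Real.cos_arccos (hbound u).1 (hbound u).2]
  · intro φ hnorm hlip N hN u hu hu0
    have hlt := hlip 0 u (by simp) hu (fun h => hu0 h.symm)
    rw [key u, hN] at hlt
    have hu1 : ‖u‖ ^ 2 < 1 := by nlinarith [norm_nonneg u]
    have hd : (0:ℝ) < 1 - ‖u‖ ^ 2 := by linarith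
    -- inner product in [-1,1]
    have hNn : ‖N‖ = 1 := by rw [← hN]; exact hnorm 0 (by simp)
    have hφn : ‖φ u‖ = 1 := hnorm u hu
    have habs : |⟪N, φ u⟫| ≤ 1 := by
      calc |⟪N, φ u⟫| ≤ ‖N‖ * ‖φ u‖ := abs_real_inner_le_norm N (φ u)
      _ = 1 := by rw [hNn, hφn]; ring
    have hmem1 : ⟪N, φ u⟫ ∈ Set.Icc (-1:ℝ) 1 := abs_le.mp habs
    have hmem2 : (1 - ‖u‖ ^ 2) / (1 + ‖u‖ ^ 2) ∈ Set.Icc (-1:ℝ) 1 := hbound u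
    have hgt : (1 - ‖u‖ ^ 2) / (1 + ‖u‖ ^ 2) < ⟪N, φ u⟫ := by
      by_contra h
      push_neg at h
      rcases eq_or_lt_of_le h with h' | h'
      · rw [h'] at hlt; exact lt_irrefl _ hlt
      · exact absurd (Real.strictAntiOn_arccos hmem1 hmem2 h') (not_lt.mpr hlt.le)
    -- compute the pseudoForm
    have hform : pseudoForm15 p q (fermiParam15 p q 0 N) (fermiParam15 p q u (φ u))
        = -((1 + ‖u‖ ^ 2) / (1 - ‖u‖ ^ 2)) * ⟪N, φ u⟫ := by
      have h0 : fermiParam15 p q 0 N = (0, N) := by simp [fermiParam15]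
      rw [h0]
      simp only [pseudoForm15, fermiParam15]
      rw [inner_zero_left, real_inner_smul_right]
      ring
    rw [hform]
    have hc : (1:ℝ) < (1 + ‖u‖ ^ 2) / (1 - ‖u‖ ^ 2) := by
      rw [lt_div_iff₀ hd]
      have : u ≠ 0 := hu0
      have h0 : 0 < ‖u‖ := norm_pos_iff.mpr hu0
      nlinarith
    have hkey : 1 < ((1 + ‖u‖ ^ 2) / (1 - ‖u‖ ^ 2)) * ⟪N, φ u⟫ := by
      have hprod : ((1 + ‖u‖ ^ 2) / (1 - ‖u‖ ^ 2)) * ((1 - ‖u‖ ^ 2) / (1 + ‖u‖ ^ 2)) = 1 := by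
        field_simp
      calc (1:ℝ) = ((1 + ‖u‖ ^ 2) / (1 - ‖u‖ ^ 2)) * ((1 - ‖u‖ ^ 2) / (1 + ‖u‖ ^ 2)) := hprod.symm
      _ < ((1 + ‖u‖ ^ 2) / (1 - ‖u‖ ^ 2)) * ⟪N, φ u⟫ := by
          apply mul_lt_mul_of_pos_left hgt
          positivity
    linarith
end

section
/- Let Λ be the graph in S^{p-1} × S^q of a 1-Lipschitz map φ : S^{p-1} → S^q, and suppose Λ contains a pair of antipodal points, i.e., there exists (u₀, w₀) with φ(u₀) = w₀ and φ(−u₀) = −w₀. Then φ maps every unit-speed geodesic γ(t) = sin(t)·u₀ + cos(t)·v (for v ∈ S^{p-1} orthogonal to u₀, t ∈ [−π/2, π/2]) to a unit-speed geodesic of S^q; that is, there exists a map φ̄ from {v ∈ S^{p-1} : ⟨v, u₀⟩ = 0} to {w ∈ S^q : ⟨w, w₀⟩ = 0} such that φ(sin(t)·u₀ + cos(t)·v) = sin(t)·w₀ + cos(t)·φ̄(v) for all t and v, and φ̄ is 1-Lipschitz. -/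
open scoped RealInnerProductSpace
open Real

private lemma le_of_arccos_le' {a b : ℝ} (ha1 : -1 ≤ a) (ha2 : a ≤ 1)
    (hb1 : -1 ≤ b) (hb2 : b ≤ 1) (h : Real.arccos a ≤ Real.arccos b) : b ≤ a := by
  have := Real.cos_le_cos_of_nonneg_of_le_pi (Real.arccos_nonneg a) (Real.arccos_le_pi b) h
  rwa [Real.cos_arccos ha1 ha2, Real.cos_arccos hb1 hb2] at this

/-- if the graph of a 1-Lipschitz sphere map `φ : S^{p-1} → S^q` contains a
pair of antipodal points `(±u₀, ±w₀)`, then `φ` maps every unit-speed geodesic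
`t ↦ sin t · u₀ + cos t · v` (with `v ⊥ u₀`) to the geodesic `t ↦ sin t · w₀ + cos t · φ̄(v)`
for a 1-Lipschitz map `φ̄` of the equatorial spheres. -/
theorem antipodal_pair_forces_geodesic_suspension
    (p q : ℕ)
    (φ : EuclideanSpace ℝ (Fin p) → EuclideanSpace ℝ (Fin (q + 1)))
    (hnorm : ∀ x : EuclideanSpace ℝ (Fin p), ‖x‖ = 1 → ‖φ x‖ = 1)
    (hlip : ∀ x y : EuclideanSpace ℝ (Fin p), ‖x‖ = 1 → ‖y‖ = 1 →
      Real.arccos ⟪φ x, φ y⟫ ≤ Real.arccos ⟪x, y⟫)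
    (u₀ : EuclideanSpace ℝ (Fin p)) (w₀ : EuclideanSpace ℝ (Fin (q + 1)))
    (hu₀ : ‖u₀‖ = 1) (hw₀ : ‖w₀‖ = 1)
    (hplus : φ u₀ = w₀) (hminus : φ (-u₀) = -w₀) :
    ∃ ψ : EuclideanSpace ℝ (Fin p) → EuclideanSpace ℝ (Fin (q + 1)),
      (∀ v, ‖v‖ = 1 → ⟪v, u₀⟫ = 0 → ‖ψ v‖ = 1 ∧ ⟪ψ v, w₀⟫ = 0) ∧
      (∀ v, ‖v‖ = 1 → ⟪v, u₀⟫ = 0 → ∀ t ∈ Set.Icc (-(π / 2)) (π / 2),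
        φ (Real.sin t • u₀ + Real.cos t • v) = Real.sin t • w₀ + Real.cos t • ψ v) ∧
      (∀ v v', ‖v‖ = 1 → ⟪v, u₀⟫ = 0 → ‖v'‖ = 1 → ⟪v', u₀⟫ = 0 →
        Real.arccos ⟪ψ v, ψ v'⟫ ≤ Real.arccos ⟪v, v'⟫) := by
  -- basic facts
  have hmu₀ : ‖(-u₀ : EuclideanSpace ℝ (Fin p))‖ = 1 := by rwa [norm_neg]
  -- inner product bounds on unit vectors
  have hbnd : ∀ (x y : EuclideanSpace ℝ (Fin (q+1))), ‖x‖ = 1 → ‖y‖ = 1 →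
      -1 ≤ ⟪x, y⟫ ∧ ⟪x, y⟫ ≤ 1 := by
    intro x y hx hy
    have := abs_real_inner_le_norm x y
    rw [hx, hy, mul_one, abs_le] at this
    exact this
  have hbndp : ∀ (x y : EuclideanSpace ℝ (Fin p)), ‖x‖ = 1 → ‖y‖ = 1 →
      -1 ≤ ⟪x, y⟫ ∧ ⟪x, y⟫ ≤ 1 := by
    intro x y hx hy
    have := abs_real_inner_le_norm x y
    rw [hx, hy, mul_one, abs_le] at this
    exact this
  -- the Lipschitz condition gives inner product monotonicity
  have hmono : ∀ x y : EuclideanSpace ℝ (Fin p), ‖x‖ = 1 → ‖y‖ = 1 →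
      ⟪x, y⟫ ≤ ⟪φ x, φ y⟫ := by
    intro x y hx hy
    have h1 := hbnd (φ x) (φ y) (hnorm x hx) (hnorm y hy)
    have h2 := hbndp x y hx hy
    exact le_of_arccos_le' h1.1 h1.2 h2.1 h2.2 (hlip x y hx hy)
  -- fix v and t; set γ t = sin t • u₀ + cos t • v
  have key : ∀ v : EuclideanSpace ℝ (Fin p), ‖v‖ = 1 → ⟪v, u₀⟫ = 0 → ∀ t : ℝ,
      ‖Real.sin t • u₀ + Real.cos t • v‖ = 1 ∧
      ⟪φ (Real.sin t • u₀ + Real.cos t • v), w₀⟫ = Real.sin t := by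
    intro v hv hvu t
    have hu₀v : ⟪u₀, v⟫ = 0 := by rw [real_inner_comm]; exact hvu
    have hγ : ‖Real.sin t • u₀ + Real.cos t • v‖ = 1 := by
      have : ‖Real.sin t • u₀ + Real.cos t • v‖ ^ 2 = 1 := by
        rw [norm_add_sq_real, norm_smul, norm_smul, real_inner_smul_left,
          real_inner_smul_right, hu₀v, hu₀, hv]
        simp only [Real.norm_eq_abs, mul_one, mul_zero, add_zero, sq_abs]
        linarith [Real.sin_sq_add_cos_sq t]
      nlinarith [norm_nonneg (Real.sin t • u₀ + Real.cos t • v)]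
    refine ⟨hγ, ?_⟩
    have hinu : ⟪Real.sin t • u₀ + Real.cos t • v, u₀⟫ = Real.sin t := by
      rw [inner_add_left, real_inner_smul_left, real_inner_smul_left, hvu,
        real_inner_self_eq_norm_sq, hu₀]
      ring
    have h1 : Real.sin t ≤ ⟪φ (Real.sin t • u₀ + Real.cos t • v), w₀⟫ := by
      have := hmono _ u₀ hγ hu₀
      rwa [hinu, hplus] at this
    have h2 : -Real.sin t ≤ -⟪φ (Real.sin t • u₀ + Real.cos t • v), w₀⟫ := by
      have := hmono _ (-u₀) hγ hmu₀
      rwa [inner_neg_right, hinu, hminus, inner_neg_right] at this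
    linarith
  refine ⟨φ, ?_, ?_, ?_⟩
  · intro v hv hvu
    refine ⟨hnorm v hv, ?_⟩
    have := (key v hv hvu 0).2
    simpa using this
  · intro v hv hvu t ht
    have hu₀v : ⟪u₀, v⟫ = 0 := by rw [real_inner_comm]; exact hvu
    obtain ⟨hγ, hw⟩ := key v hv hvu t
    have hw0 : ⟪φ v, w₀⟫ = 0 := by have := (key v hv hvu 0).2; simpa using this
    have hw0' : ⟪w₀, φ v⟫ = 0 := by rw [real_inner_comm]; exact hw0
    have hcos : 0 ≤ Real.cos t := Real.cos_nonneg_of_mem_Icc (by simpa using ht)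
    -- inner product with φ v
    have hinv : ⟪Real.sin t • u₀ + Real.cos t • v, v⟫ = Real.cos t := by
      rw [inner_add_left, real_inner_smul_left, real_inner_smul_left, hu₀v,
        real_inner_self_eq_norm_sq, hv]
      ring
    have h3 : Real.cos t ≤ ⟪φ (Real.sin t • u₀ + Real.cos t • v), φ v⟫ := by
      have := hmono _ v hγ hv
      rwa [hinv] at this
    -- norm squared of the difference is ≤ 0
    have hn1 : ‖φ (Real.sin t • u₀ + Real.cos t • v)‖ = 1 := hnorm _ hγ
    have hnφv : ‖φ v‖ = 1 := hnorm v hv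
    have hdiff : ‖φ (Real.sin t • u₀ + Real.cos t • v) -
        (Real.sin t • w₀ + Real.cos t • φ v)‖ ^ 2 ≤ 0 := by
      rw [norm_sub_sq_real, inner_add_right, real_inner_smul_right, real_inner_smul_right,
        norm_add_sq_real, norm_smul, norm_smul, real_inner_smul_left, real_inner_smul_right,
        hw0', hw₀, hnφv, hn1, hw]
      simp only [Real.norm_eq_abs, mul_one, mul_zero, add_zero, sq_abs, one_pow]
      nlinarith [Real.sin_sq_add_cos_sq t, mul_le_mul_of_nonneg_left h3 hcos]
    have : φ (Real.sin t • u₀ + Real.cos t • v) - (Real.sin t • w₀ + Real.cos t • φ v) = 0 := by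
      have h0 : ‖φ (Real.sin t • u₀ + Real.cos t • v) -
          (Real.sin t • w₀ + Real.cos t • φ v)‖ = 0 := by
        nlinarith [norm_nonneg (φ (Real.sin t • u₀ + Real.cos t • v) -
          (Real.sin t • w₀ + Real.cos t • φ v))]
      exact norm_eq_zero.mp h0
    exact sub_eq_zero.mp this
  · intro v v' hv hvu hv' hvu'
    exact hlip v v' hv hv'
end
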